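/- arXiv:2102.00559 — 13 statements merged into one kernel-verified Lean document; each statement's English description precedes it below -/
import Mathlib

section
/- If a finite group G of even order admits a faithful linear representation on a vector space V over a field F such that no nonidentity element of G fixes any nonzero vector, then G has a unique element of order 2, and this element lies in the center of G. -/
theorem stmt_0 {G : Type*} [Group G] [Fintype G] (heven : Even (Fintype.card G))
    {F : Type*} [Field F] {V : Type*} [AddCommGroup V] [Module F V]
    (ρ : Representation F G V)
    (hfaithful : Function.Injective ρ)
    (hV : ∃ v : V, v ≠ 0)
    (hfree : ∀ g : G, g ≠ 1 → ∀ v : V, v ≠ 0 → ρ g v ≠ v) :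
    (∃! g : G, orderOf g = 2) ∧ ∀ g : G, orderOf g = 2 → g ∈ Subgroup.center G := by
  -- Key: any element of order 2 acts as -1
  have key : ∀ g : G, orderOf g = 2 → ∀ v : V, ρ g v = -v := by
    intro g hg v
    have hg1 : g ≠ 1 := by
      intro h; rw [h, orderOf_one] at hg; omega
    by_cases hv : v = 0
    · simp [hv]
    have hgg : g * g = 1 := by
      have := pow_orderOf_eq_one g
      rw [hg, pow_two] at this; exact this
    have hfix : ρ g (v + ρ g v) = v + ρ g v := by
      have h2 : ρ g (ρ g v) = v := by
        have : (ρ g * ρ g) v = v := by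
          rw [← map_mul, hgg, map_one]; rfl
        simpa using this
      rw [map_add, h2, add_comm]
    have hzero : v + ρ g v = 0 := by
      by_contra h
      exact hfree g hg1 _ h hfix
    exact eq_neg_of_add_eq_zero_right hzero
  -- existence by Cauchy
  obtain ⟨g₀, hg₀⟩ := exists_prime_orderOf_dvd_card 2 (even_iff_two_dvd.mp heven)
  have same : ∀ g : G, orderOf g = 2 → ρ g = ρ g₀ := by
    intro g hg
    apply LinearMap.ext
    intro v
    rw [key g hg v, key g₀ hg₀ v]
  constructor
  · exact ⟨g₀, hg₀, fun g hg => hfaithful (same g hg)⟩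
  · intro g hg
    rw [Subgroup.mem_center_iff]
    intro h
    apply hfaithful
    apply LinearMap.ext
    intro v
    have h1 : ρ (h * g) v = -(ρ h v) := by
      rw [map_mul]
      show ρ h (ρ g v) = _
      rw [key g hg v, map_neg]
    have h2 : ρ (g * h) v = -(ρ h v) := by
      rw [map_mul]
      show ρ g (ρ h v) = _
      rw [key g hg _]
    rw [h1, h2]
end

section
/- Let G be a finite group whose order is a product of at most two (not necessarily distinct) primes. If G admits a free linear representation over ℂ, then G is cyclic. -/
open Finset Subgroup

/-- Sum of `ρ x` over a subgroup containing a nontrivial element is zero,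
for a free representation. -/
lemma aux_sum_subgroup_eq_zero {G : Type*} [Group G] [Fintype G]
    {V : Type*} [AddCommGroup V] [Module ℂ V]
    (ρ : Representation ℂ G V)
    (hfree : ∀ g : G, g ≠ 1 → ∀ v : V, v ≠ 0 → ρ g v ≠ v)
    (H : Subgroup G) [DecidablePred (· ∈ H)] (h : G) (hh : h ∈ H) (h1 : h ≠ 1) :
    ∑ x ∈ Finset.univ.filter (· ∈ H), (ρ x : V →ₗ[ℂ] V) = 0 := by
  set S : Finset G := Finset.univ.filter (· ∈ H) with hS
  set T : V →ₗ[ℂ] V := ∑ x ∈ S, (ρ x : V →ₗ[ℂ] V) with hT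
  have hcomp : ∀ w : V, ρ h (T w) = T w := by
    intro w
    have hTw : T w = ∑ x ∈ S, ρ x w := by
      rw [hT, LinearMap.coe_sum, Finset.sum_apply]
    rw [hTw, map_sum]
    refine Finset.sum_nbij' (fun x => h * x) (fun x => h⁻¹ * x) ?_ ?_ ?_ ?_ ?_
    · intro a ha
      simp only [hS, Finset.mem_filter, Finset.mem_univ, true_and] at ha ⊢
      exact H.mul_mem hh ha
    · intro a ha
      simp only [hS, Finset.mem_filter, Finset.mem_univ, true_and] at ha ⊢
      exact H.mul_mem (H.inv_mem hh) ha
    · intro a _; group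
    · intro a _; group
    · intro a _
      rw [map_mul ρ h a]
      rfl
  ext v
  simp only [LinearMap.zero_apply]
  by_contra hv
  exact hfree h h1 (T v) hv (hcomp v)

theorem stmt_1 {G : Type*} [Group G] [Finite G]
    (hcard : (Nat.card G).primeFactorsList.length ≤ 2)
    {V : Type*} [AddCommGroup V] [Module ℂ V]
    (ρ : Representation ℂ G V)
    (hV : ∃ v : V, v ≠ 0)
    (hfree : ∀ g : G, g ≠ 1 → ∀ v : V, v ≠ 0 → ρ g v ≠ v) :
    IsCyclic G := by
  classical
  cases nonempty_fintype G
  by_contra hnc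
  have hnt : Nontrivial G := by
    by_contra h
    have : Subsingleton G := not_nontrivial_iff_subsingleton.mp h
    exact hnc (by infer_instance)
  obtain ⟨g₀, hg₀⟩ := exists_ne (1 : G)
  obtain ⟨v, hv⟩ := hV
  have hn0 : Nat.card G ≠ 0 := Nat.card_pos.ne'
  -- every nontrivial element has prime order
  have hprime : ∀ g : G, g ≠ 1 → (orderOf g).Prime := by
    intro g hg
    have hdvd : orderOf g ∣ Nat.card G := orderOf_dvd_natCard g
    have hne1 : orderOf g ≠ 1 := by simpa using hg
    have hne0 : orderOf g ≠ 0 := (orderOf_pos g).ne'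
    have hnecard : orderOf g ≠ Nat.card G := by
      intro h
      exact hnc (isCyclic_of_orderOf_eq_card g h)
    obtain ⟨e, he⟩ := hdvd
    have he0 : e ≠ 0 := by
      intro h; rw [h, mul_zero] at he; exact hn0 he
    have hΩ : ArithmeticFunction.cardFactors (orderOf g) +
        ArithmeticFunction.cardFactors e ≤ 2 := by
      rw [← ArithmeticFunction.cardFactors_mul hne0 he0, ← he,
        ArithmeticFunction.cardFactors_apply]
      exact hcard
    rcases Nat.lt_or_ge (ArithmeticFunction.cardFactors (orderOf g)) 2 with h2 | h2
    · have hΩd1 : 1 ≤ ArithmeticFunction.cardFactors (orderOf g) := by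
        by_contra h
        have h0 : ArithmeticFunction.cardFactors (orderOf g) = 0 := by omega
        rw [ArithmeticFunction.cardFactors_apply] at h0
        have := List.length_eq_zero_iff.mp h0
        rw [Nat.primeFactorsList_eq_nil] at this
        tauto
      exact ArithmeticFunction.cardFactors_eq_one_iff_prime.mp (by omega)
    · have hΩe : ArithmeticFunction.cardFactors e = 0 := by omega
      rw [ArithmeticFunction.cardFactors_apply] at hΩe
      have := List.length_eq_zero_iff.mp hΩe
      rw [Nat.primeFactorsList_eq_nil] at this
      rcases this with h | h
      · exact absurd h he0
      · exact absurd (by rw [he, h, mul_one]) hnecard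
  -- equal zpowers
  have hzp : ∀ g h : G, g ≠ 1 → h ≠ 1 → h ∈ zpowers g → zpowers h = zpowers g := by
    intro g h hg hh hmem
    have hle : zpowers h ≤ zpowers g := zpowers_le.mpr hmem
    refine Subgroup.eq_of_le_of_card_ge hle ?_
    rw [Nat.card_zpowers, Nat.card_zpowers]
    have hdvd : orderOf h ∣ orderOf g := by
      have : orderOf h ∣ Nat.card (zpowers g) := by
        rw [← Nat.card_zpowers]
        exact Subgroup.card_dvd_of_le hle
      rwa [Nat.card_zpowers] at this
    exact ((Nat.prime_dvd_prime_iff_eq (hprime h hh) (hprime g hg)).mp hdvd).ge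
  -- total sum is zero
  have htot : ∑ x ∈ (Finset.univ : Finset G), (ρ x : V →ₗ[ℂ] V) = 0 := by
    have := aux_sum_subgroup_eq_zero ρ hfree ⊤ g₀ (Subgroup.mem_top g₀) hg₀
    simpa using this
  have hsub : ∀ g : G, g ≠ 1 →
      ∑ x ∈ Finset.univ.filter (· ∈ zpowers g), (ρ x : V →ₗ[ℂ] V) = 0 := by
    intro g hg
    exact aux_sum_subgroup_eq_zero ρ hfree (zpowers g) g (mem_zpowers g) hg
  set s : Finset G := Finset.univ.erase 1 with hs
  set t : Finset (Subgroup G) := s.image (fun g => zpowers g) with ht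
  have hmaps : ∀ x ∈ s, zpowers x ∈ t := fun x hx => Finset.mem_image_of_mem _ hx
  have hfib := Finset.sum_fiberwise_of_maps_to (t := t) (g := fun g : G => zpowers g)
    hmaps (fun x => (ρ x : V →ₗ[ℂ] V))
  have hfiber : ∀ H ∈ t, ∑ x ∈ s.filter (fun x => zpowers x = H), (ρ x : V →ₗ[ℂ] V)
      = -(ρ (1 : G) : V →ₗ[ℂ] V) := by
    intro H hH
    obtain ⟨g, hgs, hgH⟩ := Finset.mem_image.mp hH
    have hg1 : g ≠ 1 := (Finset.mem_erase.mp hgs).1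
    have hfilter : s.filter (fun x => zpowers x = H)
        = (Finset.univ.filter (· ∈ H)).erase 1 := by
      ext x
      constructor
      · intro hx
        obtain ⟨hxs, hxH⟩ := Finset.mem_filter.mp hx
        have hx1 : x ≠ 1 := (Finset.mem_erase.mp hxs).1
        refine Finset.mem_erase.mpr ⟨hx1, Finset.mem_filter.mpr ⟨Finset.mem_univ x, ?_⟩⟩
        exact hxH ▸ mem_zpowers x
      · intro hx
        obtain ⟨hx1, hxf⟩ := Finset.mem_erase.mp hx
        have hxH : x ∈ H := (Finset.mem_filter.mp hxf).2
        refine Finset.mem_filter.mpr ⟨Finset.mem_erase.mpr ⟨hx1, Finset.mem_univ x⟩, ?_⟩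
        rw [← hgH] at hxH ⊢
        exact hzp g x hg1 hx1 hxH
    rw [hfilter]
    have hsum : ∑ x ∈ Finset.univ.filter (· ∈ H), (ρ x : V →ₗ[ℂ] V) = 0 := by
      rw [← hgH]
      exact hsub g hg1
    have h1H : (1 : G) ∈ Finset.univ.filter (· ∈ H) := by
      simp [H.one_mem]
    have h2 := Finset.add_sum_erase _ (fun x => (ρ x : V →ₗ[ℂ] V)) h1H
    rw [hsum] at h2
    exact eq_neg_of_add_eq_zero_right h2
  have hsums : ∑ x ∈ s, (ρ x : V →ₗ[ℂ] V) = t.card • (-(ρ (1 : G) : V →ₗ[ℂ] V)) := by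
    rw [← hfib, Finset.sum_congr rfl hfiber, Finset.sum_const]
  have hsplit := Finset.add_sum_erase Finset.univ
    (fun x => (ρ x : V →ₗ[ℂ] V)) (Finset.mem_univ (1 : G))
  rw [htot, ← hs, hsums] at hsplit
  have happ := congrArg (fun F : V →ₗ[ℂ] V => F v) hsplit
  simp only [LinearMap.add_apply, LinearMap.smul_apply, LinearMap.neg_apply,
    LinearMap.zero_apply, map_one, Module.End.one_apply] at happ
  -- happ : v + t.card • (-v) = 0
  rw [← Nat.cast_smul_eq_nsmul ℂ] at happ
  have hcast : ((1 : ℂ) - (t.card : ℂ)) • v = 0 := by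
    rw [sub_smul, one_smul]
    rw [smul_neg, ← sub_eq_add_neg] at happ
    exact happ
  have htc : (t.card : ℂ) = 1 := by
    rcases smul_eq_zero.mp hcast with h | h
    · exact (sub_eq_zero.mp h).symm
    · exact absurd h hv
  have htcard : t.card = 1 := by exact_mod_cast htc
  obtain ⟨H, hHt⟩ := Finset.card_eq_one.mp htcard
  have hgen : ∀ x : G, x ∈ zpowers g₀ := by
    have hg0t : zpowers g₀ ∈ t := hmaps g₀ (by simp [hs, hg₀])
    rw [hHt, Finset.mem_singleton] at hg0t
    intro x
    by_cases hx : x = 1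
    · exact hx ▸ (zpowers g₀).one_mem
    · have hxt : zpowers x ∈ t := hmaps x (by simp [hs, hx])
      rw [hHt, Finset.mem_singleton] at hxt
      have hxx : zpowers x = zpowers g₀ := by rw [hxt, hg0t]
      exact hxx ▸ mem_zpowers x
  exact hnc ⟨⟨g₀, hgen⟩⟩
end

section
/- Let G be a finite group, F a field whose characteristic does not divide |G|, and let I be the two-sided ideal of the group algebra F[G] generated by the norm elements N_H = Σ_{h∈H} h for all nontrivial subgroups H of G. Then G admits a free linear representation over F if and only if I is a proper ideal of F[G]. -/
/-!
For a nontrivial subgroup `H`, the vector `N_H v` is fixed by `H`, so a free representation kills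
every `N_H`. Conversely, if `v` is fixed by some `g ≠ 1`, its stabilizer `S` is a nontrivial
subgroup with `N_S v = |S| v`, and `|S|` is invertible in `F` because it divides `|G|`; so a
representation killing every `N_H` is free. Hence the free representations are exactly the
`F[G]`-modules annihilated by `I`, and a nonzero one exists iff `I ≠ F[G]`, witnessed by `F[G]/I`.
-/

universe u

open MonoidAlgebra

namespace Representation

section Monoid

variable {k G : Type*} [Monoid G]

noncomputable def ofAlgHom [CommSemiring k] {A : Type*} [Semiring A] [Algebra k A]
    (φ : MonoidAlgebra k G →ₐ[k] A) : Representation k G A :=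
  (Algebra.lmul k A).toMonoidHom.comp ((φ : MonoidAlgebra k G →* A).comp (of k G))

lemma asAlgebraHom_ofAlgHom [CommSemiring k] {A : Type*} [Semiring A] [Algebra k A]
    (φ : MonoidAlgebra k G →ₐ[k] A) :
    (ofAlgHom φ).asAlgebraHom = (Algebra.lmul k A).comp φ := by
  ext g a
  simp [ofAlgHom]

variable [CommRing k]

lemma ker_asAlgebraHom_ofAlgHom {A : Type*} [Ring A] [Algebra k A]
    (φ : MonoidAlgebra k G →ₐ[k] A) :
    TwoSidedIdeal.ker (ofAlgHom φ).asAlgebraHom = TwoSidedIdeal.ker φ := by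
  ext x
  simp only [TwoSidedIdeal.mem_ker, asAlgebraHom_ofAlgHom]
  constructor
  · intro h
    simpa using congr($h 1)
  · intro h
    ext a
    simp [h]

lemma ker_asAlgebraHom_ne_top {V : Type*} [AddCommGroup V] [Module k V] [Nontrivial V]
    (ρ : Representation k G V) : TwoSidedIdeal.ker ρ.asAlgebraHom ≠ ⊤ := by
  intro h
  have : ρ.asAlgebraHom 1 = 0 := (TwoSidedIdeal.mem_ker _).1 (TwoSidedIdeal.one_mem_iff _ |>.2 h)
  simp at this

end Monoid

variable {k G V : Type*} [CommSemiring k] [Group G] [AddCommMonoid V] [Module k V]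
  (ρ : Representation k G V)

def IsFree : Prop := ∀ g : G, g ≠ 1 → ∀ v : V, ρ g v = v → v = 0

def stabilizer (v : V) : Subgroup G where
  carrier := {g | ρ g v = v}
  one_mem' := by simp
  mul_mem' {a b} ha hb := by simp_all [map_mul]
  inv_mem' {a} ha := by
    simp only [Set.mem_ofPred_eq] at ha ⊢
    conv_lhs => rw [← ha]
    exact inv_self_apply ρ a v

lemma asAlgebraHom_sum_single_one (H : Subgroup G) [Fintype H] :
    ρ.asAlgebraHom (∑ h : H, single (h : G) (1 : k)) = norm (ρ.comp H.subtype) := by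
  simp [norm]

lemma norm_comp_subtype_apply_of_le_stabilizer {H : Subgroup G} [Fintype H] {v : V}
    (hH : H ≤ ρ.stabilizer v) : norm (ρ.comp H.subtype) v = Fintype.card H • v := by
  have hfix (h : H) : ρ h v = v := hH h.2
  simp [norm, hfix]

lemma IsFree.norm_comp_subtype_eq_zero {ρ : Representation k G V} (hρ : ρ.IsFree)
    {H : Subgroup G} [Fintype H] (hH : H ≠ ⊥) : norm (ρ.comp H.subtype) = 0 := by
  obtain ⟨h, hh⟩ := H.ne_bot_iff_exists_ne_one.mp hH
  ext v
  exact hρ h (by simpa using hh) _ (self_norm_apply (ρ.comp H.subtype) h v)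

end Representation

section NormIdeal

variable (k G : Type*) [Field k] [Group G] [Fintype G]

open scoped Classical in
noncomputable def normIdeal : TwoSidedIdeal (MonoidAlgebra k G) :=
  TwoSidedIdeal.span
    {x | ∃ H : Subgroup G, H ≠ ⊥ ∧ x = ∑ h : H, MonoidAlgebra.single (h : G) (1 : k)}

variable {k G}

lemma natCast_card_subgroup_ne_zero (hchar : ¬ ringChar k ∣ Fintype.card G)
    (H : Subgroup G) [Fintype H] : (Fintype.card H : k) ≠ 0 := by
  rw [Ne, ringChar.spec]
  refine fun hdvd => hchar (hdvd.trans ?_)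
  simpa [Nat.card_eq_fintype_card] using H.card_subgroup_dvd_card

theorem Representation.isFree_iff_normIdeal_le_ker {V : Type*} [AddCommGroup V] [Module k V]
    (ρ : Representation k G V) (hchar : ¬ ringChar k ∣ Fintype.card G) :
    ρ.IsFree ↔ normIdeal k G ≤ TwoSidedIdeal.ker ρ.asAlgebraHom := by
  classical
  rw [normIdeal, TwoSidedIdeal.span_le]
  constructor
  · rintro hρ _ ⟨H, hH, rfl⟩
    rw [SetLike.mem_coe, TwoSidedIdeal.mem_ker, asAlgebraHom_sum_single_one,
      hρ.norm_comp_subtype_eq_zero hH]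
  · intro hker g hg v hv
    set S := ρ.stabilizer v
    have hS : S ≠ ⊥ :=
      Subgroup.ne_bot_iff_exists_ne_one.2 ⟨⟨g, hv⟩, fun h => hg congr(Subtype.val $h)⟩
    have hN : norm (ρ.comp S.subtype) v = 0 := by
      rw [← asAlgebraHom_sum_single_one, (TwoSidedIdeal.mem_ker _).1 (hker ⟨S, hS, rfl⟩)]
      rfl
    rw [norm_comp_subtype_apply_of_le_stabilizer ρ le_rfl, ← Nat.cast_smul_eq_nsmul k,
      smul_eq_zero] at hN
    exact hN.resolve_left (natCast_card_subgroup_ne_zero hchar S)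

end NormIdeal

open scoped Classical in
theorem stmt_2 {G : Type u} [Group G] [Fintype G] {F : Type u} [Field F]
    (hchar : ¬ (ringChar F ∣ Fintype.card G))
    (I : TwoSidedIdeal (MonoidAlgebra F G))
    (hI : I = TwoSidedIdeal.span
      {x : MonoidAlgebra F G | ∃ H : Subgroup G, H ≠ ⊥ ∧
        x = ∑ h : H, MonoidAlgebra.single (h : G) (1 : F)}) :
    (∃ (V : Type u) (_ : AddCommGroup V) (_ : Module F V)
        (ρ : Representation F G V),
        (∃ v : V, v ≠ 0) ∧ ∀ g : G, g ≠ 1 → ∀ v : V, v ≠ 0 → ρ g v ≠ v) ↔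
      I ≠ ⊤ := by
  obtain rfl : I = normIdeal F G := hI
  constructor
  · rintro ⟨V, _, _, ρ, ⟨v, hv⟩, hfree⟩ htop
    have hρ : ρ.IsFree := fun g hg v hfix => by_contra fun hv => hfree g hg v hv hfix
    have : Nontrivial V := ⟨v, 0, hv⟩
    refine ρ.ker_asAlgebraHom_ne_top (top_le_iff.1 ?_)
    exact htop ▸ (ρ.isFree_iff_normIdeal_le_ker hchar).1 hρ
  · intro hne
    set π := (normIdeal F G).ringCon.mkₐ F
    have hker : TwoSidedIdeal.ker (Representation.ofAlgHom π).asAlgebraHom = normIdeal F G := by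
      rw [Representation.ker_asAlgebraHom_ofAlgHom]
      exact TwoSidedIdeal.ker_ringCon_mk' _
    have hρ := ((Representation.ofAlgHom π).isFree_iff_normIdeal_le_ker hchar).2 hker.ge
    refine ⟨_, _, _, Representation.ofAlgHom π, ⟨1, fun h1 => hne ?_⟩,
      fun g hg v hv hfix => hv (hρ g hg v hfix)⟩
    rw [← TwoSidedIdeal.one_mem_iff, ← hker, Representation.ker_asAlgebraHom_ofAlgHom,
      TwoSidedIdeal.mem_ker, map_one, h1]
end

section
/- Let G be a group of order p^k for a prime p, and suppose H₁ and H₂ are distinct abelian subgroups of G each of index p. If p ≠ 2, then the map x ↦ x^p is a group homomorphism from G to H₁ ∩ H₂; if p = 2, then the map x ↦ x^4 is a group homomorphism from G to H₁ ∩ H₂. -/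
/-!
Subgroups of prime index are maximal, so `H₁ ⊔ H₂ = G`; as both are abelian, `H₁ ⊓ H₂` is
central. Each `G ⧸ Hᵢ` is abelian of order `p`, so commutators and `p`-th powers lie in
`H₁ ⊓ H₂`. Hence `G` has class at most two, `(x y)ⁿ = xⁿ yⁿ [y, x] ^ (n choose 2)`, and
`[y, x] ^ p = [y ^ p, x] = 1`. Finally `p ∣ p choose 2` for odd `p`, and `4 choose 2 = 6` is even.
-/

open Subgroup
open scoped commutatorElement

namespace Subgroup

variable {G : Type*} [Group G]

theorem isCoatom_of_index_prime {H : Subgroup G} (hH : H.index.Prime) : IsCoatom H := by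
  refine ⟨fun h => by simp [h, Nat.not_prime_one] at hH, fun K hHK => ?_⟩
  rcases hH.eq_one_or_self_of_dvd _ (index_dvd_of_le hHK.le) with hK | hK
  · exact index_eq_one.mp hK
  · have hrel : H.relIndex K = 1 := by
      have := relIndex_mul_index hHK.le
      rw [hK] at this
      exact (Nat.mul_eq_right hH.ne_zero).mp this
    exact absurd (relIndex_eq_one.mp hrel) hHK.not_ge

theorem normal_of_index_prime [Finite G] [Group.IsNilpotent G] {H : Subgroup G}
    (hH : H.index.Prime) : H.Normal :=
  NormalizerCondition.normal_of_coatom H Group.normalizerCondition_of_isNilpotent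
    (isCoatom_of_index_prime hH)

theorem inf_le_center_of_sup_eq_top {H₁ H₂ : Subgroup G} [IsMulCommutative H₁]
    [IsMulCommutative H₂] (hsup : H₁ ⊔ H₂ = ⊤) : H₁ ⊓ H₂ ≤ center G := by
  have h₁ : H₁ ≤ centralizer (H₁ ⊓ H₂ : Subgroup G) :=
    le_centralizer_iff.mp (inf_le_left.trans (le_centralizer H₁))
  have h₂ : H₂ ≤ centralizer (H₁ ⊓ H₂ : Subgroup G) :=
    le_centralizer_iff.mp (inf_le_right.trans (le_centralizer H₂))
  have := sup_le h₁ h₂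
  rwa [hsup, top_le_iff, centralizer_eq_top_iff_subset] at this

end Subgroup

section ClassTwo

variable {G : Type*} [Group G]

theorem commutatorElement_pow_left_of_mem_center {x y : G} (h : ⁅x, y⁆ ∈ center G) (n : ℕ) :
    ⁅x ^ n, y⁆ = ⁅x, y⁆ ^ n := by
  have hconj : y * x⁻¹ * y⁻¹ = x⁻¹ * ⁅x, y⁆ := by rw [commutatorElement_def]; group
  have hc : Commute x⁻¹ ⁅x, y⁆ := mem_center_iff.mp h x⁻¹
  calc ⁅x ^ n, y⁆ = x ^ n * (y * x⁻¹ * y⁻¹) ^ n := by rw [conj_pow, commutatorElement_def]; group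
    _ = ⁅x, y⁆ ^ n := by rw [hconj, hc.mul_pow, inv_pow, mul_inv_cancel_left]

theorem mul_pow_of_commutatorElement_mem_center {x y : G} (h : ⁅y, x⁆ ∈ center G) (n : ℕ) :
    (x * y) ^ n = x ^ n * y ^ n * ⁅y, x⁆ ^ n.choose 2 := by
  have hc (k : ℕ) (g : G) : g * ⁅y, x⁆ ^ k = ⁅y, x⁆ ^ k * g := mem_center_iff.mp (pow_mem h k) g
  have hswap (k : ℕ) : y ^ k * x = x * y ^ k * ⁅y, x⁆ ^ k := by
    rw [hc, ← commutatorElement_pow_left_of_mem_center h, commutatorElement_def]; group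
  induction n with
  | zero => simp
  | succ n ih =>
    calc (x * y) ^ (n + 1) = x ^ n * (y ^ n * x) * y * ⁅y, x⁆ ^ n.choose 2 := by
          rw [pow_succ, ih, mul_assoc _ _ (x * y), ← hc]; group
      _ = x ^ n * x * (y ^ n * (⁅y, x⁆ ^ n * y)) * ⁅y, x⁆ ^ n.choose 2 := by rw [hswap]; group
      _ = x ^ (n + 1) * y ^ (n + 1) * ⁅y, x⁆ ^ (n + n.choose 2) := by
          rw [← hc n y, pow_add]; group
      _ = x ^ (n + 1) * y ^ (n + 1) * ⁅y, x⁆ ^ (n + 1).choose 2 := by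
          rw [Nat.choose_succ_succ', Nat.choose_one_right]

theorem mul_pow_of_commutator_le_center {p n : ℕ} (hcomm : commutator G ≤ center G)
    (hpow : ∀ x : G, x ^ p ∈ center G) (hdvd : p ∣ n.choose 2) (x y : G) :
    (x * y) ^ n = x ^ n * y ^ n := by
  have hyx : ⁅y, x⁆ ∈ center G := hcomm (commutator_mem_commutator (mem_top y) (mem_top x))
  have hyx_pow : ⁅y, x⁆ ^ p = 1 := by
    rw [← commutatorElement_pow_left_of_mem_center hyx, commutatorElement_eq_one_iff_commute]
    exact (mem_center_iff.mp (hpow y) x).symm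
  obtain ⟨m, hm⟩ := hdvd
  rw [mul_pow_of_commutatorElement_mem_center hyx, hm, pow_mul, hyx_pow, one_pow, mul_one]

end ClassTwo

theorem stmt_3 {G : Type*} [Group G] [Fintype G] {p k : ℕ} (hp : p.Prime)
    (hcard : Fintype.card G = p ^ k)
    (H₁ H₂ : Subgroup G) (hne : H₁ ≠ H₂)
    (hab₁ : IsMulCommutative H₁) (hab₂ : IsMulCommutative H₂)
    (hi₁ : H₁.index = p) (hi₂ : H₂.index = p) :
    (p ≠ 2 → (∀ x : G, x ^ p ∈ H₁ ⊓ H₂) ∧ ∀ x y : G, (x * y) ^ p = x ^ p * y ^ p) ∧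
    (p = 2 → (∀ x : G, x ^ 4 ∈ H₁ ⊓ H₂) ∧ ∀ x y : G, (x * y) ^ 4 = x ^ 4 * y ^ 4) := by
  have : Fact p.Prime := ⟨hp⟩
  have : Group.IsNilpotent G :=
    (IsPGroup.of_card (Nat.card_eq_fintype_card.trans hcard)).isNilpotent
  have hn₁ := normal_of_index_prime (hi₁ ▸ hp)
  have hn₂ := normal_of_index_prime (hi₂ ▸ hp)
  have hsup : H₁ ⊔ H₂ = ⊤ := (isCoatom_of_index_prime (hi₁ ▸ hp)).sup_eq_top_of_ne
    (isCoatom_of_index_prime (hi₂ ▸ hp)) hne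
  have hcenter : H₁ ⊓ H₂ ≤ center G := inf_le_center_of_sup_eq_top hsup
  have hcomm : commutator G ≤ H₁ ⊓ H₂ :=
    le_inf (hn₁.commutator_le_of_self_sup_commutative_eq_top hsup hab₂)
      (hn₂.commutator_le_of_self_sup_commutative_eq_top (sup_comm H₁ H₂ ▸ hsup) hab₁)
  have hpow (x : G) : x ^ p ∈ H₁ ⊓ H₂ := ⟨hi₁ ▸ H₁.pow_index_mem x, hi₂ ▸ H₂.pow_index_mem x⟩
  have hmul_pow {n : ℕ} (hn : p ∣ n.choose 2) (x y : G) : (x * y) ^ n = x ^ n * y ^ n :=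
    mul_pow_of_commutator_le_center (hcomm.trans hcenter) (fun x => hcenter (hpow x)) hn x y
  refine ⟨fun hp2 => ⟨hpow, hmul_pow (hp.dvd_choose_self two_ne_zero (hp.two_le.lt_of_ne' hp2))⟩,
    fun hp2 => ?_⟩
  subst hp2
  exact ⟨fun x => pow_mul x 2 2 ▸ hpow (x ^ 2), hmul_pow (by decide)⟩
end

section
/- If p is an odd prime, then every finite p-group with exactly one subgroup of order p is cyclic. -/
/-!
Induct on the order. A subgroup `M` of index `p` inherits the hypothesis, so it is cyclic, say
`M = ⟨a⟩` of order `p ^ n`, and it is normal. Pick `x ∉ M` and write `x⁻¹ a x = a ^ s`,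
`x ^ p = a ^ r`. Then `(x a ^ j) ^ p = x ^ p a ^ (j (1 + s + ⋯ + s ^ (p - 1)))`, and since
`s ≡ 1 [ZMOD p]` and `p` is odd, the geometric sum is `p` times a unit modulo `p ^ n`.
If `p ∣ r`, some `x a ^ j` is then an element of order `p` outside `M`, contradicting uniqueness,
as `M` already contains one. Otherwise `x ^ p` generates `M`, so `x` generates `G`.
-/

open Subgroup Finset

theorem Int.dvd_sub_one_of_dvd_pow_sub_one {p : ℕ} (hp : p.Prime) {s : ℤ}
    (h : (p : ℤ) ∣ s ^ p - 1) : (p : ℤ) ∣ s - 1 := by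
  have : Fact p.Prime := ⟨hp⟩
  rw [← ZMod.intCast_zmod_eq_zero_iff_dvd] at h ⊢
  push_cast at h ⊢
  rwa [ZMod.pow_card] at h

theorem Int.sq_dvd_geom_sum_sub_of_dvd_sub_one {p : ℕ} (hp : Odd p) {s : ℤ}
    (h : (p : ℤ) ∣ s - 1) : (p : ℤ) ^ 2 ∣ ∑ i ∈ Finset.range p, s ^ i - p := by
  obtain ⟨b, hb⟩ := h
  simpa [sub_eq_iff_eq_add.mp hb, add_comm] using odd_sq_dvd_geom_sum₂_sub (1 : ℤ) b hp

section Conjugation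

variable {G : Type*} [Group G] {x a : G} {s : ℤ}

theorem SemiconjBy.pow_left_zpow_pow (h : SemiconjBy x (a ^ s) a) (i : ℕ) :
    SemiconjBy (x ^ i) (a ^ s ^ i) a := by
  induction i with
  | zero => simp
  | succ i ih =>
    rw [pow_succ, pow_succ', zpow_mul]
    exact ih.mul_left (h.zpow_right _)

theorem SemiconjBy.mul_zpow_pow (h : SemiconjBy x (a ^ s) a) (j : ℤ) (n : ℕ) :
    (x * a ^ j) ^ n = x ^ n * a ^ (j * ∑ i ∈ range n, s ^ i) := by
  induction n with
  | zero => simp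
  | succ n ih =>
    have hmove : a ^ (j * ∑ i ∈ range n, s ^ i) * x
        = x * a ^ (s * (j * ∑ i ∈ range n, s ^ i)) := by
      rw [zpow_mul a s]; exact (h.zpow_right _).eq.symm
    rw [pow_succ, ih, mul_assoc, ← mul_assoc _ x, hmove, geom_sum_succ, pow_succ]
    simp only [mul_assoc, ← zpow_add]
    ring_nf

theorem SemiconjBy.orderOf_dvd_pow_sub_one (h : SemiconjBy x (a ^ s) a) {m : ℕ}
    (hm : x ^ m ∈ zpowers a) : (orderOf a : ℤ) ∣ s ^ m - 1 := by
  obtain ⟨r, hr⟩ := mem_zpowers_iff.mp hm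
  have hfix : a ^ (s ^ m) = a := by
    have := (h.pow_left_zpow_pow m).eq
    rw [← hr] at this
    exact mul_left_cancel (this.trans (Commute.self_zpow a r).eq)
  rw [orderOf_dvd_iff_zpow_eq_one, zpow_sub, hfix, zpow_one, mul_inv_cancel]

theorem mem_zpowers_zpow_of_isCoprime {r : ℤ} (h : IsCoprime r (orderOf a)) :
    a ∈ zpowers (a ^ r) := by
  obtain ⟨v, w, hvw⟩ := h
  refine mem_zpowers_iff.mpr ⟨v, ?_⟩
  calc (a ^ r) ^ v = a ^ (r * v) := (zpow_mul a r v).symm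
    _ = a ^ (1 : ℤ) := zpow_eq_zpow_iff_modEq.mpr <|
      Int.modEq_iff_dvd.mpr ⟨w, by linear_combination -hvw⟩
    _ = a := zpow_one a

end Conjugation

namespace Subgroup

variable {G : Type*} [Group G]

theorem eq_top_of_le_of_not_le {M K : Subgroup G} (hM : M.index.Prime) (hle : M ≤ K)
    (hK : ¬K ≤ M) : K = ⊤ := by
  have hmul := relIndex_mul_index hle
  rcases hM.eq_one_or_self_of_dvd _ (index_dvd_of_le hle) with h | h
  · exact index_eq_one.mp h
  · rw [h, Nat.mul_eq_right hM.ne_zero, relIndex_eq_one] at hmul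
    exact absurd hmul hK

theorem subsingleton_setOf_card_eq {n : ℕ}
    (h : {H : Subgroup G | Nat.card H = n}.Subsingleton) (M : Subgroup G) :
    {L : Subgroup M | Nat.card L = n}.Subsingleton := fun _ h₁ _ h₂ =>
  map_injective M.subtype_injective <| h
    ((card_map_of_injective M.subtype_injective).trans h₁)
    ((card_map_of_injective M.subtype_injective).trans h₂)

theorem mem_of_orderOf_eq_prime {p : ℕ} (hp : p.Prime)
    (h : {H : Subgroup G | Nat.card H = p}.Subsingleton) {M : Subgroup G} [Finite M]
    (hM : p ∣ Nat.card M) {y : G} (hy : orderOf y = p) : y ∈ M := by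
  have : Fact p.Prime := ⟨hp⟩
  obtain ⟨m, hm⟩ := exists_prime_orderOf_dvd_card' p hM
  have hym : zpowers y = zpowers (m : G) :=
    h (by simp [Nat.card_zpowers, hy]) (by simp [Nat.card_zpowers, orderOf_submonoid, hm])
  exact zpowers_le.mpr m.2 (hym ▸ mem_zpowers y)

end Subgroup

section PGroup

variable {G : Type*} [Group G] {p : ℕ}

theorem exists_mul_zpow_pow_eq_one {x a : G} {s r : ℤ} {n : ℕ} (hxa : SemiconjBy x (a ^ s) a)
    (ha : orderOf a = p ^ n) (hsum : (p : ℤ) ^ 2 ∣ ∑ i ∈ range p, s ^ i - p)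
    (hr : x ^ p = a ^ (p * r)) : ∃ j : ℤ, (x * a ^ j) ^ p = 1 := by
  obtain ⟨t, ht⟩ := hsum
  -- the geometric sum is `p * (1 + p * t)`; take `j = -r * v` with `v` inverse to `1 + p * t`
  -- modulo `p ^ n`
  obtain ⟨v, w, hvw⟩ : IsCoprime (1 + p * t) ((p : ℤ) ^ n) :=
    IsCoprime.pow_right ⟨1, -t, by ring⟩
  refine ⟨-r * v, ?_⟩
  rw [hxa.mul_zpow_pow, hr, ← zpow_add, ← orderOf_dvd_iff_zpow_eq_one, ha]
  exact ⟨p * r * w, by push_cast; linear_combination (-r * v) * ht + (-p * r) * hvw⟩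

theorem isCyclic_of_index_zpowers_eq_prime [Finite G] (hp : p.Prime) (hodd : Odd p)
    (huniq : {H : Subgroup G | Nat.card H = p}.Subsingleton) {a : G} {n : ℕ} (hn : n ≠ 0)
    (ha : orderOf a = p ^ n) (hnormal : (zpowers a).Normal) (hidx : (zpowers a).index = p) :
    IsCyclic G := by
  have : Fact p.Prime := ⟨hp⟩
  obtain ⟨x, hx⟩ : ∃ x, x ∉ zpowers a := by
    by_contra! h
    exact hp.one_lt.ne' (hidx ▸ index_eq_one.mpr ((eq_top_iff' _).mpr h))
  obtain ⟨s, hs⟩ : ∃ s : ℤ, a ^ s = x⁻¹ * a * x := by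
    simpa [mem_zpowers_iff] using hnormal.conj_mem a (mem_zpowers a) x⁻¹
  have hxa : SemiconjBy x (a ^ s) a := by rw [SemiconjBy, hs]; group
  obtain ⟨r, hr⟩ : ∃ r : ℤ, a ^ r = x ^ p := mem_zpowers_iff.mp (hidx ▸ pow_index_mem _ x)
  have hsp : (p : ℤ) ^ n ∣ s ^ p - 1 := by
    simpa [ha] using hxa.orderOf_dvd_pow_sub_one (hr ▸ zpow_mem (mem_zpowers a) r)
  have hsum := Int.sq_dvd_geom_sum_sub_of_dvd_sub_one hodd
    (Int.dvd_sub_one_of_dvd_pow_sub_one hp ((dvd_pow_self _ hn).trans hsp))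
  by_cases hpr : (p : ℤ) ∣ r
  · obtain ⟨r', rfl⟩ := hpr
    obtain ⟨j, hj⟩ := exists_mul_zpow_pow_eq_one hxa ha hsum hr.symm
    have hy : x * a ^ j ∉ zpowers a := by
      rwa [mul_mem_cancel_right (zpow_mem (mem_zpowers a) j)]
    have hyp : orderOf (x * a ^ j) = p := orderOf_eq_prime hj fun h => hy (h ▸ one_mem _)
    exact absurd (mem_of_orderOf_eq_prime hp huniq
      (by rw [Nat.card_zpowers, ha]; exact dvd_pow_self p hn) hyp) hy
  · have hcop : IsCoprime r (orderOf a) := by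
      rw [ha, Nat.cast_pow]
      exact ((Nat.prime_iff_prime_int.mp hp).coprime_iff_not_dvd.mpr hpr).symm.pow_right
    have hax : zpowers a ≤ zpowers x := zpowers_le.mpr <|
      zpowers_le.mpr (pow_mem (mem_zpowers x) p) (hr ▸ mem_zpowers_zpow_of_isCoprime hcop)
    exact isCyclic_iff_exists_zpowers_eq_top.mpr
      ⟨x, eq_top_of_le_of_not_le (hidx ▸ hp) hax fun h => hx (h (mem_zpowers x))⟩

theorem isCyclic_of_card_eq_prime_pow (hp : p.Prime) (hodd : Odd p) {k : ℕ}
    (hcard : Nat.card G = p ^ k) (huniq : {H : Subgroup G | Nat.card H = p}.Subsingleton) :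
    IsCyclic G := by
  have : Fact p.Prime := ⟨hp⟩
  induction k generalizing G with
  | zero => exact isCyclic_of_card_dvd_prime (p := p) (by simp [hcard])
  | succ k ih =>
    have : Finite G := Nat.finite_of_card_ne_zero (by simp [hcard, hp.ne_zero])
    obtain ⟨M, hM⟩ := Sylow.exists_subgroup_card_pow_prime p (n := k)
      (by rw [hcard]; exact pow_dvd_pow p k.le_succ)
    rcases eq_or_ne k 0 with rfl | hk
    · exact isCyclic_of_card_dvd_prime (p := p) (by simp [hcard])
    have hidx : M.index = p := by
      have := M.card_mul_index
      rw [hM, hcard, pow_succ] at this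
      exact Nat.eq_of_mul_eq_mul_left (pow_pos hp.pos k) this
    have hnormal : M.Normal :=
      normal_of_index_eq_minFac_card <| by
        rw [hidx, hcard, Nat.pow_minFac k.succ_ne_zero, hp.minFac_eq]
    obtain ⟨a, rfl⟩ :=
      M.isCyclic_iff_exists_zpowers_eq_top.mp (ih hM (subsingleton_setOf_card_eq huniq M))
    exact isCyclic_of_index_zpowers_eq_prime hp hodd huniq hk
      (by rw [← Nat.card_zpowers, hM]) hnormal hidx

end PGroup

theorem stmt_4 {G : Type*} [Group G] [Fintype G] {p k : ℕ} (hp : p.Prime)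
    (hodd : Odd p) (hcard : Fintype.card G = p ^ k)
    (huniq : ∃! H : Subgroup G, Nat.card H = p) :
    IsCyclic G :=
  isCyclic_of_card_eq_prime_pow hp hodd (Nat.card_eq_fintype_card.trans hcard)
    fun _ h₁ _ h₂ => huniq.unique h₁ h₂
end

section
/- Let G be a finite group of order 2^n with a unique element of order 2 that contains at least two distinct cyclic subgroups of index 2. Then G is isomorphic to the quaternion group of order 8. -/
open Subgroup

private lemma aux_gen {G : Type*} [Group G] (H : Subgroup G) (hc : IsCyclic H) :
    ∃ x : G, Subgroup.zpowers x = H ∧ orderOf x = Nat.card H := by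
  obtain ⟨g, hg⟩ := hc.exists_generator
  refine ⟨(g : G), ?_, ?_⟩
  · refine le_antisymm (Subgroup.zpowers_le.mpr g.2) ?_
    intro h hh
    obtain ⟨t, ht⟩ := hg ⟨h, hh⟩
    rw [Subgroup.mem_zpowers_iff]
    exact ⟨t, by have := congrArg Subtype.val ht; push_cast at this; exact this⟩
  · rw [Subgroup.orderOf_coe, orderOf_eq_card_of_forall_mem_zpowers hg]

private lemma aux_conj_mem {G : Type*} [Group G] (H : Subgroup G) (hi : H.index = 2)
    {y x : G} (hy : y ∉ H) (hx : x ∈ H) : y * x * y⁻¹ ∈ H := by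
  have h1 : y * x ∉ H := by
    rw [Subgroup.mul_mem_iff_of_index_two hi]; simp [hx, hy]
  have h2 : y⁻¹ ∉ H := fun h => hy ((inv_mem_iff).mp h)
  rw [Subgroup.mul_mem_iff_of_index_two hi]
  simp [h1, h2]

theorem stmt_5 {G : Type*} [Group G] [Fintype G] {n : ℕ}
    (hcard : Fintype.card G = 2 ^ n)
    (huniq : ∃! g : G, orderOf g = 2)
    (H₁ H₂ : Subgroup G) (hne : H₁ ≠ H₂)
    (hc₁ : IsCyclic H₁) (hc₂ : IsCyclic H₂)
    (hi₁ : H₁.index = 2) (hi₂ : H₂.index = 2) :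
    Nonempty (G ≃* QuaternionGroup 2) := by
  obtain ⟨g₀, hg₀, hg₀u⟩ := huniq
  obtain ⟨x, hzx, hox⟩ := aux_gen H₁ hc₁
  obtain ⟨y, hzy, hoy⟩ := aux_gen H₂ hc₂
  have hcardn : Nat.card G = 2 ^ n := by rw [Nat.card_eq_fintype_card, hcard]
  have hcH₁ : Nat.card H₁ * 2 = 2 ^ n := by
    have := Subgroup.card_mul_index (H := H₁); rw [hi₁, hcardn] at this; exact this
  have hcH₂ : Nat.card H₂ * 2 = 2 ^ n := by
    have := Subgroup.card_mul_index (H := H₂); rw [hi₂, hcardn] at this; exact this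
  obtain ⟨k, rfl⟩ : ∃ k, n = k + 1 := by
    rcases n with _ | k
    · rw [pow_zero] at hcH₁; omega
    · exact ⟨k, rfl⟩
  rw [pow_succ] at hcH₁ hcH₂
  have hc1 : Nat.card H₁ = 2 ^ k := Nat.eq_of_mul_eq_mul_right two_pos hcH₁
  have hc2 : Nat.card H₂ = 2 ^ k := Nat.eq_of_mul_eq_mul_right two_pos hcH₂
  rw [hc1] at hox
  rw [hc2] at hoy
  rcases k with _ | _ | k
  · -- k = 0 : both subgroups are trivial
    exfalso
    apply hne
    rw [← hzx, ← hzy, orderOf_eq_one_iff.mp hox, orderOf_eq_one_iff.mp hoy]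
  · -- k = 1 : both subgroups generated by the unique involution
    exfalso
    apply hne
    rw [← hzx, ← hzy, hg₀u x hox, hg₀u y hoy]
  · -- main case : orderOf x = 2 ^ (k+2)
    have hxH : x ∈ H₁ := hzx ▸ Subgroup.mem_zpowers x
    have hyH : y ∉ H₁ := by
      intro hy
      apply hne
      have hle : H₂ ≤ H₁ := by rw [← hzy]; exact Subgroup.zpowers_le.mpr hy
      exact (Subgroup.eq_of_le_of_card_ge hle (by rw [hc1, hc2])).symm
    -- conjugation and square
    obtain ⟨m, hm⟩ : ∃ m : ℤ, x ^ m = y * x * y⁻¹ :=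
      Subgroup.mem_zpowers_iff.mp (hzx ▸ aux_conj_mem H₁ hi₁ hyH hxH)
    obtain ⟨s, hs⟩ : ∃ s : ℤ, x ^ s = y ^ 2 :=
      Subgroup.mem_zpowers_iff.mp (hzx ▸ Subgroup.sq_mem_of_index_two hi₁ y)
    have hdvd : ∀ a b : ℤ, x ^ a = x ^ b ↔ (2:ℤ) ^ (k+2) ∣ a - b := by
      intro a b
      rw [← orderOf_dvd_sub_iff_zpow_eq_zpow, hox]
      push_cast
      rfl
    have hconj : ∀ t : ℤ, y * x ^ t * y⁻¹ = x ^ (m * t) := by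
      intro t
      rw [zpow_mul, hm, conj_zpow]
    -- x ^ (m*m) = x
    have hmm : x ^ (m * m) = x ^ (1:ℤ) := by
      have h1 := hconj m
      rw [hm] at h1
      have h2 : y * (y * x * y⁻¹) * y⁻¹ = y ^ 2 * x * (y ^ 2)⁻¹ := by rw [pow_two]; group
      rw [h2, ← hs] at h1
      rw [← h1, zpow_one]
      have : Commute (x ^ s) x := (Commute.refl x).zpow_left s
      rw [this.eq]
      group
    have hdvd1 : (2:ℤ) ^ (k+2) ∣ m * m - 1 := (hdvd _ _).mp hmm
    -- x ^ (m*s) = x ^ s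
    have hms : x ^ (m * s) = x ^ s := by
      have h1 := hconj s
      rw [hs] at h1
      have h2 : y * y ^ 2 * y⁻¹ = y ^ 2 := by group
      rw [h2, ← hs] at h1
      exact h1.symm
    have hdvd2 : (2:ℤ) ^ (k+2) ∣ m * s - s := (hdvd _ _).mp hms
    -- s = 2u with u odd
    obtain ⟨u, rfl⟩ : ∃ u : ℤ, s = 2 * u := by
      have h1 : x ^ (s * 2^(k+1) : ℤ) = x ^ (0:ℤ) := by
        have hcast : ((2:ℤ)^(k+1)) = ((2^(k+1) : ℕ) : ℤ) := by push_cast; ring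
        rw [zpow_zero, zpow_mul, hcast, zpow_natCast, hs, ← pow_mul, ← pow_succ', ← hoy,
          pow_orderOf_eq_one]
      have h2 : (2:ℤ)^(k+2) ∣ s * 2^(k+1) := by simpa using (hdvd _ _).mp h1
      obtain ⟨c, hc⟩ := h2
      refine ⟨c, ?_⟩
      have h3 : (s - 2*c) * 2^(k+1) = 0 := by linear_combination hc
      have h4 : ((2:ℤ)^(k+1)) ≠ 0 := by positivity
      rcases mul_eq_zero.mp h3 with h | h
      · linarith
      · exact absurd h h4
    have hu : Odd u := by
      rw [← Int.not_even_iff_odd]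
      rintro ⟨v, hv⟩
      have h1 : y ^ ((2:ℕ)^(k+1)) = 1 := by
        have h2 : y ^ ((2:ℕ)^(k+1)) = (y^2) ^ ((2:ℕ)^k) := by rw [← pow_mul, ← pow_succ']
        rw [h2, ← hs, ← zpow_natCast (x ^ _), ← zpow_mul]
        have h5 : x ^ (2 * u * ((2^k : ℕ) : ℤ)) = x ^ (0:ℤ) := by
          refine (hdvd _ _).mpr ⟨v, ?_⟩
          push_cast
          have : u = v + v := hv
          rw [this]; ring
        rw [h5, zpow_zero]
      have h6 := orderOf_dvd_of_pow_eq_one h1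
      rw [hoy] at h6
      have h7 := Nat.le_of_dvd (by positivity) h6
      have h8 : (2:ℕ)^(k+1) < 2^(k+2) := Nat.pow_lt_pow_right one_lt_two (by omega)
      omega
    obtain ⟨t, ht⟩ := hu
    have h3 : (2:ℤ)^(k+1) ∣ u * (m-1) := by
      obtain ⟨c, hc⟩ := hdvd2
      refine ⟨c, ?_⟩
      have h4 : (2:ℤ) * (u*(m-1)) = 2 * (2^(k+1)*c) := by linear_combination hc
      exact mul_left_cancel₀ (by norm_num) h4
    have hcop : IsCoprime ((2:ℤ)^(k+1)) u :=
      IsCoprime.pow_left ⟨-t, 1, by linarith⟩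
    have hw' : (2:ℤ)^(k+1) ∣ m - 1 := hcop.dvd_of_dvd_mul_left h3
    obtain ⟨w, hwv⟩ := hw'
    by_cases ho : Odd (1 + 2^k * w : ℤ)
    · exfalso
      obtain ⟨α, β, hαβ⟩ : IsCoprime (1 + 2^k*w : ℤ) ((2:ℤ)^(k+2)) := by
        obtain ⟨r, hr⟩ := ho
        exact IsCoprime.pow_right ⟨1, -r, by linarith⟩
      have ht2 : (x ^ (-(u*α)) * y) * (x ^ (-(u*α)) * y) = x ^ (-(u*α) + m*(-(u*α)) + 2*u) := by
        have h2 : (x ^ (-(u*α)) * y) * (x ^ (-(u*α)) * y)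
            = x ^ (-(u*α)) * (y * x ^ (-(u*α)) * y⁻¹) * y^2 := by
          rw [pow_two]; group
        rw [h2, hconj (-(u*α)), ← hs, ← zpow_add, ← zpow_add]
      have hT : (x ^ (-(u*α)) * y) * (x ^ (-(u*α)) * y) = 1 := by
        rw [ht2, (hdvd _ 0).mpr ?_, zpow_zero]
        rw [sub_zero]
        exact ⟨2*u*β, by linear_combination (-(2*u)) * hαβ + (-(u*α)) * hwv⟩
      have ht0ne : x ^ (-(u*α)) * y ≠ 1 := by
        intro h
        have hy' : (x ^ (-(u*α)))⁻¹ = y := inv_eq_of_mul_eq_one_right h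
        apply hyH
        rw [← hy', ← zpow_neg]
        exact hzx ▸ Subgroup.mem_zpowers_iff.mpr ⟨-(-(u*α)), rfl⟩
      haveI : Fact (Nat.Prime 2) := ⟨Nat.prime_two⟩
      have hot : orderOf (x ^ (-(u*α)) * y) = 2 :=
        orderOf_eq_prime (by rw [pow_two]; exact hT) ht0ne
      have hoz : orderOf (x ^ ((2:ℕ)^(k+1))) = 2 := by
        rw [orderOf_pow' x (by positivity), hox,
          Nat.gcd_eq_right (pow_dvd_pow 2 (by omega)), pow_succ,
          Nat.mul_div_cancel_left _ (by positivity)]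
      have heq : x ^ (-(u*α)) * y = x ^ ((2:ℕ)^(k+1)) := by
        rw [hg₀u _ hot, hg₀u _ hoz]
      apply hyH
      have hy2 : y = x ^ (u*α) * x ^ ((2:ℕ)^(k+1)) := by
        rw [← heq, ← mul_assoc, ← zpow_add]
        simp
      rw [hy2, ← hzx]
      exact mul_mem (Subgroup.mem_zpowers_iff.mpr ⟨u*α, rfl⟩)
        (Subgroup.mem_zpowers_iff.mpr ⟨((2^(k+1) : ℕ) : ℤ), by rw [zpow_natCast]⟩)
    · -- even case: k = 0 and G ≅ Q₈
      have hk0 : k = 0 := by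
        by_contra hk
        apply ho
        rw [add_comm]
        obtain ⟨k', rfl⟩ := Nat.exists_eq_succ_of_ne_zero hk
        exact Even.add_one ⟨2^k'*w, by rw [pow_succ]; ring⟩
      subst hk0
      have hw_odd : Odd w := by
        rcases Int.even_or_odd w with he | hodd
        · exfalso
          apply ho
          rw [add_comm, pow_zero, one_mul]
          exact he.add_one
        · exact hodd
      obtain ⟨r, hr⟩ := hw_odd
      have hox4 : orderOf x = 4 := by rw [hox]; norm_num
      have hdvd4 : ∀ a b : ℤ, x ^ a = x ^ b ↔ (4:ℤ) ∣ a - b := by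
        intro a b
        have h4' := hdvd a b
        norm_num at h4'
        exact h4'
      have hmx : x ^ m = x⁻¹ := by
        have h4 : x ^ m = x ^ (-1 : ℤ) := by
          refine (hdvd4 _ _).mpr ⟨r + 1, ?_⟩
          linear_combination hwv + 2*hr
        rw [h4, zpow_neg_one]
      have hconjx : y * x * y⁻¹ = x⁻¹ := by rw [← hm, hmx]
      have hy2 : y ^ 2 = x ^ (2:ℕ) := by
        rw [← hs]
        have h5 : x ^ (2*u : ℤ) = x ^ (((2:ℕ)) : ℤ) := by
          refine (hdvd4 _ _).mpr ⟨t, ?_⟩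
          push_cast
          linear_combination 2*ht
        rw [h5, zpow_natCast]
      have hcard8 : Fintype.card G = 8 := by rw [hcard]; norm_num
      -- the power map ZMod 4 → G
      haveI : NeZero (2*2) := ⟨by norm_num⟩
      set f : ZMod (2*2) → G := fun i => x ^ i.val with hfdef
      have hford : orderOf x = 2*2 := by rw [hox4]
      have hpm : ∀ p : ℕ, x ^ (p % (2*2)) = x ^ p := by
        intro p
        conv_rhs => rw [← pow_mod_orderOf]
        rw [hford]
      have hf_add : ∀ i j : ZMod (2*2), f (i+j) = f i * f j := by
        intro i j
        show x ^ (i+j).val = x ^ i.val * x ^ j.val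
        rw [ZMod.val_add, hpm, pow_add]
      have hf_one : f 0 = 1 := by
        show x ^ (0 : ZMod (2*2)).val = 1
        rw [ZMod.val_zero, pow_zero]
      have hf_neg : ∀ i : ZMod (2*2), f (-i) = (f i)⁻¹ := by
        intro i
        have h6 := hf_add (-i) i
        rw [neg_add_cancel, hf_one] at h6
        exact eq_inv_of_mul_eq_one_left h6.symm
      have hf_comm : ∀ i j : ZMod (2*2), f i * f j = f j * f i := by
        intro i j
        show x ^ i.val * x ^ j.val = x ^ j.val * x ^ i.val
        rw [← pow_add, add_comm, pow_add]
      have hf_comm' : ∀ i j : ZMod (2*2), f j * (f i)⁻¹ = (f i)⁻¹ * f j := by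
        intro i j
        rw [← hf_neg, hf_comm]
      have hf_int : ∀ t' : ℤ, x ^ t' = f ((t' : ZMod (2*2))) := by
        intro t'
        show _ = x ^ ((t' : ZMod (2*2)).val)
        rw [← zpow_natCast x]
        refine (hdvd4 t' _).mpr ?_
        have hval : (((t' : ZMod (2*2)).val : ℤ)) = t' % ((2*2 : ℕ) : ℤ) := ZMod.val_intCast t'
        rw [hval]
        push_cast
        exact Int.dvd_self_sub_of_emod_eq rfl
      have hyp : ∀ p : ℕ, y * x ^ p * y⁻¹ = (x ^ p)⁻¹ := fun p => by
        rw [← conj_pow, hconjx, inv_pow]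
      have hxy : ∀ i : ZMod (2*2), f i * y = y * (f i)⁻¹ := by
        intro i
        have h7 := hyp i.val
        have h9 : y * x ^ i.val = (x ^ i.val)⁻¹ * y := by rw [← h7]; group
        show x ^ i.val * y = y * (x ^ i.val)⁻¹
        calc x ^ i.val * y = x ^ i.val * (y * x ^ i.val) * (x ^ i.val)⁻¹ := by group
        _ = x ^ i.val * ((x ^ i.val)⁻¹ * y) * (x ^ i.val)⁻¹ := by rw [h9]
        _ = y * (x ^ i.val)⁻¹ := by group
      have hyy : y * y = f 2 := by
        have h9 : f 2 = x ^ (2:ℕ) := by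
          show x ^ ((2 : ZMod (2*2)).val) = x ^ (2:ℕ)
          congr 1
        rw [h9, ← hy2, pow_two]
      -- the homomorphism
      let φ : QuaternionGroup 2 → G := fun q => match q with
        | .a i => f i
        | .xa i => y * f i
      have hφmul : ∀ p q : QuaternionGroup 2, φ (p * q) = φ p * φ q := by
        rintro (i | i) (j | j)
        · show f (i + j) = f i * f j
          exact hf_add i j
        · show y * f (j - i) = f i * (y * f j)
          rw [sub_eq_add_neg, hf_add, hf_neg,
            show f i * (y * f j) = (f i * y) * f j from (mul_assoc _ _ _).symm, hxy i,
            mul_assoc]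
          exact congrArg (fun z => y * z) (hf_comm' i j)
        · show y * f (i + j) = (y * f i) * f j
          rw [hf_add, mul_assoc]
        · show f (((2:ℕ) : ZMod (2*2)) + j - i) = (y * f i) * (y * f j)
          have h10 : (y * f i) * (y * f j) = (y * y) * ((f i)⁻¹ * f j) := by
            rw [show (y * f i) * (y * f j) = y * (f i * y) * f j by group, hxy i]
            group
          rw [h10, hyy, sub_eq_add_neg, hf_add, hf_add, hf_neg, mul_assoc, hf_comm',
            show ((2:ℕ) : ZMod (2*2)) = (2 : ZMod (2*2)) by push_cast; rfl]
      -- surjectivity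
      have hsurj : Function.Surjective φ := by
        intro g
        by_cases hg : g ∈ H₁
        · rw [← hzx] at hg
          obtain ⟨t', ht'⟩ := Subgroup.mem_zpowers_iff.mp hg
          exact ⟨.a ((t' : ZMod (2*2))), by show f _ = g; rw [← hf_int, ht']⟩
        · have h2 : y⁻¹ * g ∈ H₁ := by
            rw [Subgroup.mul_mem_iff_of_index_two hi₁]
            have h2' : y⁻¹ ∉ H₁ := fun h => hyH (inv_mem_iff.mp h)
            simp [hg, h2']
          rw [← hzx] at h2
          obtain ⟨t', ht'⟩ := Subgroup.mem_zpowers_iff.mp h2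
          refine ⟨.xa ((t' : ZMod (2*2))), ?_⟩
          show y * f _ = g
          rw [← hf_int, ht']
          group
      have hbij : Function.Bijective φ :=
        (Fintype.bijective_iff_surjective_and_card φ).mpr
          ⟨hsurj, by rw [QuaternionGroup.card, hcard8]⟩
      exact ⟨(MulEquiv.ofBijective (MonoidHom.mk' φ hφmul) hbij).symm⟩
end

section
/- Let G be a finite 2-group of order at least 4. Then G is cyclic if and only if G has a unique subgroup of order 4 and that subgroup is cyclic. -/
/-!
In a cyclic group the subgroups are determined by their orders. Conversely, if `H` is the unique
subgroup of order 4, then every `y` with `y ^ 4 = 1` lies in `H` (Sylow), and `H` lies in the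
cyclic subgroup `P = ⟨g⟩` generated by an element of maximal order `2 ^ m`. If `P ≠ G`, some `x ∉ P`
normalises `P` with `x ^ 2 ∈ P`; writing `x g x⁻¹ = g ^ s` and `x ^ 2 = g ^ t`, one has
`(x g ^ a) ^ 2 = g ^ (t + a (s + 1))`, and the congruences `s ^ 2 ≡ 1`, `t (s - 1) ≡ 0` modulo
`2 ^ m`, together with `t` even (since `x ^ (2 ^ m) = 1`), allow choosing `a` with
`(x g ^ a) ^ 4 = 1`. Then `x g ^ a ∈ H ≤ P`, contradicting `x ∉ P`.
-/

open Subgroup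

theorem Int.exists_two_pow_dvd_add_mul {m : ℕ} {s t : ℤ} (hm : 2 ≤ m) (hs : 2 ^ m ∣ s ^ 2 - 1)
    (hts : 2 ^ m ∣ t * (s - 1)) (ht : Even t) : ∃ a : ℤ, 2 ^ (m - 1) ∣ t + a * (s + 1) := by
  have hs_odd : Odd s := by
    have h2 : (2 : ℤ) ∣ s ^ 2 - 1 := (dvd_pow_self 2 (by omega)).trans hs
    rw [← Int.not_even_iff_odd]
    rintro ⟨c, rfl⟩
    have h1 : (2 : ℤ) ∣ (c + c) ^ 2 - ((c + c) ^ 2 - 1) := dvd_sub ⟨2 * c ^ 2, by ring⟩ h2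
    norm_num at h1
  have hpow : (2 : ℤ) ^ m = 2 * 2 ^ (m - 1) := by rw [← pow_succ']; congr 1; omega
  obtain ⟨c, rfl⟩ := hs_odd
  rcases Int.even_or_odd c with ⟨d, rfl⟩ | ⟨d, rfl⟩
  · -- `s + 1 = 2 (2d + 1)`, and `2d + 1` is invertible modulo `2 ^ (m - 2)`
    obtain ⟨t', rfl⟩ := ht
    obtain ⟨u, v, huv⟩ : IsCoprime (2 * d + 1) ((2 : ℤ) ^ (m - 2)) :=
      IsCoprime.pow_right ⟨1, -d, by ring⟩
    refine ⟨-(t' * u), t' * v, ?_⟩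
    rw [show (2 : ℤ) ^ (m - 1) = 2 * 2 ^ (m - 2) by rw [← pow_succ']; congr 1; omega]
    linear_combination (-2 * t') * huv
  · -- `s - 1 = 2 (2d + 1)`, so `2 ^ (m - 1) ∣ t` already
    refine ⟨0, ?_⟩
    have hcop : IsCoprime ((2 : ℤ) ^ m) (2 * d + 1) := IsCoprime.pow_left ⟨-d, 1, by ring⟩
    have h : (2 : ℤ) ^ m ∣ 2 * t := by
      rw [show t * (2 * (2 * d + 1) + 1 - 1) = 2 * t * (2 * d + 1) by ring] at hts
      exact hcop.dvd_of_dvd_mul_right hts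
    rw [hpow] at h
    simpa using (mul_dvd_mul_iff_left two_ne_zero).mp h

section

variable {G : Type*} [Group G]

theorem exists_mul_zpow_pow_four_eq_one {g x : G} {m : ℕ} (hm : 2 ≤ m) (hg : orderOf g = 2 ^ m)
    (hx : x ^ 2 ^ m = 1) (hx2 : x ^ 2 ∈ zpowers g) (hxg : x * g * x⁻¹ ∈ zpowers g) :
    ∃ a : ℤ, (x * g ^ a) ^ 4 = 1 := by
  obtain ⟨s, hs⟩ := mem_zpowers_iff.mp hxg
  obtain ⟨t, ht⟩ := mem_zpowers_iff.mp hx2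
  have hdvd : ∀ i : ℤ, g ^ i = 1 ↔ 2 ^ m ∣ i := fun i ↦ by
    rw [← orderOf_dvd_iff_zpow_eq_one, hg]; norm_cast
  have hconj : ∀ a : ℤ, x * g ^ a * x⁻¹ = g ^ (s * a) := fun a ↦ by rw [zpow_mul, hs, conj_zpow]
  -- `x ^ 2 ∈ zpowers g` commutes with `g`, so conjugating twice by `x` is trivial
  have hs2 : 2 ^ m ∣ s ^ 2 - 1 := by
    rw [← hdvd, zpow_sub, sq, zpow_mul, hs, conj_zpow, hs, zpow_one, mul_inv_eq_one]
    calc x * (x * g * x⁻¹) * x⁻¹ = x ^ 2 * g * (x ^ 2)⁻¹ := by rw [sq]; group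
      _ = g := by rw [← ht]; group
  have hts : 2 ^ m ∣ t * (s - 1) := by
    rw [← hdvd, mul_sub, mul_one, zpow_sub, mul_comm, ← hconj, ht]
    group
  have hpow : (2 : ℤ) ^ m = 2 ^ (m - 1) * 2 := by rw [← pow_succ]; congr 1; omega
  have ht2 : Even t := by
    have h : 2 ^ m ∣ t * 2 ^ (m - 1) := by
      rw [← hdvd, zpow_mul, ht, show (2 : ℤ) ^ (m - 1) = (2 ^ (m - 1) : ℕ) by norm_cast,
        zpow_natCast, ← pow_mul, ← pow_succ', Nat.sub_add_cancel (by omega), hx]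
    rw [hpow, mul_comm t] at h
    exact even_iff_two_dvd.mpr ((mul_dvd_mul_iff_left (by positivity)).mp h)
  obtain ⟨a, ha⟩ := Int.exists_two_pow_dvd_add_mul hm hs2 hts ht2
  have hsq : (x * g ^ a) ^ 2 = g ^ (t + a * (s + 1)) := by
    rw [sq, show x * g ^ a * (x * g ^ a) = (x * g ^ a * x⁻¹) * x ^ 2 * g ^ a by group, hconj, ← ht,
      ← zpow_add, ← zpow_add]
    ring_nf
  refine ⟨a, ?_⟩
  rw [show 4 = 2 * 2 from rfl, pow_mul, hsq, ← zpow_natCast, ← zpow_mul, hdvd, hpow]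
  exact mul_dvd_mul_right ha 2

theorem IsCyclic.mem_iff_pow_card_eq_one [Finite G] [IsCyclic G] (K : Subgroup G) {y : G} :
    y ∈ K ↔ y ^ Nat.card K = 1 := by
  classical
  have := Fintype.ofFinite G
  have hmem : ∀ z ∈ K, z ^ Nat.card K = 1 := fun z hz ↦
    orderOf_dvd_iff_pow_eq_one.mp (orderOf_dvd_natCard K hz)
  have hK : (K : Set G).toFinset = ({a | a ^ Nat.card K = 1} : Finset G) :=
    Finset.eq_of_subset_of_card_le (fun z hz ↦ by simpa using hmem z (by simpa using hz)) <| by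
      rw [Set.toFinset_card, ← Nat.card_eq_fintype_card]
      exact IsCyclic.card_pow_eq_one_le Nat.card_pos
  refine ⟨hmem y, fun hy ↦ ?_⟩
  simpa using (hK ▸ Finset.mem_filter.mpr ⟨Finset.mem_univ y, hy⟩ : y ∈ (K : Set G).toFinset)

theorem IsCyclic.subgroup_eq_of_card_eq [Finite G] [IsCyclic G] {K K' : Subgroup G}
    (h : Nat.card K = Nat.card K') : K = K' := by
  ext y
  rw [IsCyclic.mem_iff_pow_card_eq_one, IsCyclic.mem_iff_pow_card_eq_one, h]

theorem IsPGroup.exists_orderOf_eq_exponent [Finite G] {p : ℕ} [Fact p.Prime] (hG : IsPGroup p G) :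
    ∃ g : G, orderOf g = Monoid.exponent G := by
  obtain ⟨n, hn⟩ := hG.exists_exponent_eq_pow
  obtain ⟨g, hg⟩ := (Fact.out : p.Prime).exists_orderOf_eq_pow_factorization_exponent (G := G)
  refine ⟨g, ?_⟩
  rw [hg, hn, Nat.Prime.factorization_pow Fact.out]
  simp

theorem Subgroup.mem_of_pow_eq_one_of_forall_card_eq {p n : ℕ} [Fact p.Prime] [Finite G]
    (hdvd : p ^ n ∣ Nat.card G) {H : Subgroup G} (hH : ∀ K : Subgroup G, Nat.card K = p ^ n → K = H)
    {y : G} (hy : y ^ p ^ n = 1) : y ∈ H := by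
  obtain ⟨j, hj, hy'⟩ := (Nat.dvd_prime_pow Fact.out).mp (orderOf_dvd_of_pow_eq_one hy)
  obtain ⟨K, hK, hyK⟩ := Sylow.exists_subgroup_card_pow_prime_le p hdvd (zpowers y)
    (by rw [Nat.card_zpowers, hy']) hj
  exact hH K hK ▸ hyK (mem_zpowers y)

theorem IsPGroup.exists_sq_mem_of_ne_top [Finite G] (hG : IsPGroup 2 G) {P : Subgroup G}
    (hP : P ≠ ⊤) : ∃ x ∉ P, x ^ 2 ∈ P ∧ ∀ y ∈ P, x * y * x⁻¹ ∈ P := by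
  have : Fact (Nat.Prime 2) := ⟨Nat.prime_two⟩
  obtain ⟨n, hn⟩ := IsPGroup.iff_card.mp (hG.to_subgroup P)
  obtain ⟨j, hj⟩ := hG.index P
  have hj0 : j ≠ 0 := by rintro rfl; exact hP (index_eq_one.mp hj)
  have hdvd : 2 ^ (n + 1) ∣ Nat.card G := by
    rw [← P.card_mul_index, hn, hj, pow_succ]
    exact mul_dvd_mul_left _ (dvd_pow_self 2 hj0)
  obtain ⟨K, hK, hPK⟩ := Sylow.exists_subgroup_card_pow_succ hdvd hn
  have hidx : (P.subgroupOf K).index = 2 := by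
    have h := (P.subgroupOf K).card_mul_index
    rw [hK, Nat.card_congr (subgroupOfEquivOfLe hPK).toEquiv, hn, pow_succ] at h
    exact Nat.eq_of_mul_eq_mul_left (by positivity) h
  obtain ⟨x, hx⟩ := SetLike.exists_not_mem_of_ne_top (P.subgroupOf K)
    (fun h ↦ by simp [h] at hidx)
  refine ⟨x, fun h ↦ hx (mem_subgroupOf.mpr h), ?_, fun y hy ↦ ?_⟩
  · simpa using mem_subgroupOf.mp (sq_mem_of_index_two hidx x)
  · exact mem_subgroupOf.mp ((normal_of_index_eq_two hidx).conj_mem ⟨y, hPK hy⟩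
      (mem_subgroupOf.mpr hy) x)

theorem IsPGroup.isCyclic_of_forall_pow_four_eq_one_mem [Finite G] (hG : IsPGroup 2 G) {g : G}
    (hg : orderOf g = Monoid.exponent G) (h4 : 4 ∣ orderOf g)
    (hsub : ∀ y : G, y ^ 4 = 1 → y ∈ zpowers g) : IsCyclic G := by
  have : Fact (Nat.Prime 2) := ⟨Nat.prime_two⟩
  obtain ⟨m, hm⟩ := IsPGroup.iff_orderOf.mp hG g
  have hm2 : 2 ≤ m := (Nat.pow_dvd_pow_iff_le_right one_lt_two).mp (hm ▸ h4)
  refine isCyclic_iff_exists_zpowers_eq_top.mpr ⟨g, by_contra fun hP ↦ ?_⟩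
  obtain ⟨x, hxP, hx2, hxg⟩ := hG.exists_sq_mem_of_ne_top hP
  obtain ⟨a, ha⟩ := exists_mul_zpow_pow_four_eq_one hm2 hm
    (by rw [← hm, hg]; exact Monoid.pow_exponent_eq_one x) hx2 (hxg g (mem_zpowers g))
  exact hxP (by simpa using mul_mem (hsub _ ha) (zpow_mem (mem_zpowers g) (-a)))

end

theorem stmt_8 {G : Type*} [Group G] [Fintype G] {k : ℕ} (hk : 2 ≤ k)
    (hcard : Fintype.card G = 2 ^ k) :
    IsCyclic G ↔ ∃ H : Subgroup G, Nat.card H = 4 ∧ IsCyclic H ∧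
      ∀ H' : Subgroup G, Nat.card H' = 4 → H' = H := by
  have : Fact (Nat.Prime 2) := ⟨Nat.prime_two⟩
  rw [← Nat.card_eq_fintype_card] at hcard
  have h4 : 2 ^ 2 ∣ Nat.card G := hcard ▸ pow_dvd_pow 2 hk
  constructor
  · intro
    obtain ⟨H, hH⟩ := Sylow.exists_subgroup_card_pow_prime 2 h4
    exact ⟨H, hH, inferInstance, fun H' hH' ↦ IsCyclic.subgroup_eq_of_card_eq (hH'.trans hH.symm)⟩
  · rintro ⟨H, hH4, hHcyc, huniq⟩
    have hG : IsPGroup 2 G := IsPGroup.of_card hcard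
    obtain ⟨g, hg⟩ := hG.exists_orderOf_eq_exponent
    obtain ⟨h, hh⟩ := hHcyc.exists_ofOrder_eq_natCard
    have hg4 : 4 ∣ orderOf g := by
      rw [hg, ← hH4, ← hh, ← orderOf_coe]
      exact Monoid.order_dvd_exponent _
    have hHg : H ≤ zpowers g := by
      rw [← huniq (zpowers (g ^ (orderOf g / 4)))
        (by rw [Nat.card_zpowers, orderOf_pow_orderOf_div (orderOf_pos g).ne' hg4])]
      exact zpowers_le_of_mem (npow_mem_zpowers g _)
    exact hG.isCyclic_of_forall_pow_four_eq_one_mem hg hg4 fun y hy ↦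
      hHg (mem_of_pow_eq_one_of_forall_card_eq h4 huniq hy)
end

section
/- Let G be a finite group in which every Sylow subgroup is cyclic, and let q be the largest prime dividing |G|. Then G has a unique (hence normal) q-Sylow subgroup. -/
/-!
Induct on `|G|`. Let `p` be the smallest prime divisor of `|G|`. If `p = q`, then `G` is a
`q`-group. Otherwise a Sylow `p`-subgroup `P` is cyclic, so `|Aut P|` has no prime factor
dividing `[N(P) : C(P)]`, i.e. `N(P) = C(P)`, and Burnside's transfer theorem gives a normal
complement `N` of `P`. By induction `N` has a unique Sylow `q`-subgroup; it is characteristic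
in `N`, hence normal in `G`, and it is a Sylow subgroup of `G` because `[G : N] = |P|` is prime
to `q`.
-/

open Subgroup

theorem IsPGroup.subsingleton_sylow {p : ℕ} {G : Type*} [Group G] (hG : IsPGroup p G) :
    Subsingleton (Sylow p G) :=
  ⟨fun P Q ↦ Sylow.ext <| by
    rw [eq_top_iff.mpr ((hG.to_subgroup ⊤).le_sylow_of_normal P),
      eq_top_iff.mpr ((hG.to_subgroup ⊤).le_sylow_of_normal Q)]⟩

theorem Sylow.subsingleton_of_not_dvd_index {p : ℕ} [Fact p.Prime] {G : Type*} [Group G]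
    [Finite G] {N : Subgroup G} [N.Normal] (hN : ¬ p ∣ N.index) [Subsingleton (Sylow p N)] :
    Subsingleton (Sylow p G) := by
  let Q : Sylow p N := default
  have hQ : ¬ p ∣ (Q.map N.subtype).index := by
    rw [index_map_subtype, Nat.Prime.dvd_mul Fact.out, not_or]
    exact ⟨Q.not_dvd_index, hN⟩
  let P := (Q.isPGroup'.map N.subtype).toSylow hQ
  have : (P : Subgroup G).Normal := ConjAct.normal_of_characteristic_of_normal
  exact (Sylow.unique_of_normal P this).instSubsingleton

theorem IsZGroup.subsingleton_sylow_of_forall_le {G : Type*} [Group G] [Finite G] [IsZGroup G]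
    {q : ℕ} [Fact q.Prime] (hq : ∀ r : ℕ, r.Prime → r ∣ Nat.card G → r ≤ q) :
    Subsingleton (Sylow q G) := by
  induction h : Nat.card G using Nat.strong_induction_on generalizing G with
  | _ n ih =>
  subst h
  by_cases hG : ∀ r : ℕ, r.Prime → r ∣ Nat.card G → r = q
  · exact (IsPGroup.of_card (Nat.eq_prime_pow_of_unique_prime_dvd Nat.card_pos.ne'
      (hG _ · ·))).subsingleton_sylow
  push Not at hG
  obtain ⟨r, hr, hrG, hrq⟩ := hG
  set p := (Nat.card G).minFac
  have hp : p.Prime := Nat.minFac_prime fun h ↦ hr.ne_one (Nat.dvd_one.mp (h ▸ hrG))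
  have hpq : p < q := (Nat.minFac_le_of_dvd hr.two_le hrG).trans_lt ((hq r hr hrG).lt_of_ne hrq)
  have := Fact.mk hp
  let P : Sylow p G := default
  have hNP := IsCyclic.isComplement' rfl (IsZGroup.isZGroup p hp P)
  set N := (MonoidHom.transferSylow P _).ker
  have hqP : ¬ q ∣ Nat.card P := by
    obtain ⟨k, hk⟩ := P.2.exists_card_eq
    rw [hk]
    exact fun h ↦ hpq.ne' <|
      (Nat.prime_dvd_prime_iff_eq Fact.out hp).mp (Nat.Prime.dvd_of_dvd_pow Fact.out h)
  have hNG : Nat.card N < Nat.card G := by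
    rw [← N.card_mul_index, hNP.symm.index_eq_card]
    exact lt_mul_of_one_lt_right Nat.card_pos
      ((P : Subgroup G).one_lt_card_iff_ne_bot.mpr (P.ne_bot_of_dvd_card (Nat.card G).minFac_dvd))
  have : Subsingleton (Sylow q N) :=
    ih _ hNG (fun r hr hrN ↦ hq r hr (hrN.trans N.card_subgroup_dvd_card)) rfl
  exact Sylow.subsingleton_of_not_dvd_index (hNP.symm.index_eq_card ▸ hqP)

theorem stmt_10_general {G : Type*} [Group G] [Fintype G]
    (hsyl : ∀ p : ℕ, p.Prime → ∀ P : Sylow p G, IsCyclic P)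
    {q : ℕ} (hq : q.Prime)
    (hmax : ∀ r : ℕ, r.Prime → r ∣ Fintype.card G → r ≤ q) :
    (∀ P Q : Sylow q G, P = Q) ∧ ∀ P : Sylow q G, (P : Subgroup G).Normal := by
  have := Fact.mk hq
  have := IsZGroup.mk hsyl
  rw [← Nat.card_eq_fintype_card] at hmax
  have := IsZGroup.subsingleton_sylow_of_forall_le hmax
  exact ⟨Subsingleton.elim, Sylow.normal_of_subsingleton⟩

theorem stmt_10 {G : Type*} [Group G] [Fintype G]
    (hsyl : ∀ p : ℕ, p.Prime → ∀ P : Sylow p G, IsCyclic P)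
    {q : ℕ} (hq : q.Prime) (hdvd : q ∣ Fintype.card G)
    (hmax : ∀ r : ℕ, r.Prime → r ∣ Fintype.card G → r ≤ q) :
    (∀ P Q : Sylow q G, P = Q) ∧ ∀ P : Sylow q G, (P : Subgroup G).Normal :=
  stmt_10_general hsyl hq hmax
end

section
/- Let G be a finite group in which every Sylow subgroup is cyclic. Then the commutator subgroup G' of G is cyclic and the quotient G/G' is cyclic. -/
theorem stmt_11 {G : Type*} [Group G] [Fintype G]
    (hsyl : ∀ p : ℕ, p.Prime → ∀ P : Sylow p G, IsCyclic P) :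
    IsCyclic (commutator G) ∧ IsCyclic (G ⧸ commutator G) := by
  have : IsZGroup G := ⟨hsyl⟩
  exact ⟨IsZGroup.isCyclic_commutator G, IsZGroup.isCyclic_abelianization⟩
end

section
/- Let G be a finite group with a subgroup H that contains every element of G of prime order. If H is freely representable over a field F, then G is freely representable over F. -/
universe u v

theorem stmt_14 {G : Type u} [Group G] [Finite G] (H : Subgroup G)
    (hprime : ∀ g : G, (orderOf g).Prime → g ∈ H)
    {F : Type v} [Field F]
    {W : Type (max u v)} [AddCommGroup W] [Module F W]
    (σ : Representation F H W)
    (hW : ∃ w : W, w ≠ 0)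
    (hfreeH : ∀ h : H, h ≠ 1 → ∀ w : W, w ≠ 0 → σ h w ≠ w) :
    ∃ (V : Type (max u v)) (_ : AddCommGroup V) (_ : Module F V)
      (ρ : Representation F G V),
      (∃ v : V, v ≠ 0) ∧ ∀ g : G, g ≠ 1 → ∀ v : V, v ≠ 0 → ρ g v ≠ v := by
  classical
  obtain ⟨w, hw⟩ := hW
  -- The coinduced representation: H-equivariant functions G → W
  set S : Submodule F (G → W) :=
    { carrier := {f | ∀ (x : G) (h : H), f (x * h) = σ h⁻¹ (f x)}
      add_mem' := by
        intro a b ha hb x h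
        simp only [Pi.add_apply, ha x h, hb x h, map_add]
      zero_mem' := by intro x h; simp
      smul_mem' := by
        intro c a ha x h
        simp only [Pi.smul_apply, ha x h, map_smul] } with hS
  have memS : ∀ f : S, ∀ (x : G) (h : H), f.1 (x * h) = σ h⁻¹ (f.1 x) := fun f => f.2
  -- the G-action
  have Tmem : ∀ (g : G) (f : S), (fun x => f.1 (g⁻¹ * x)) ∈ S := by
    intro g f x h
    show f.1 (g⁻¹ * (x * h)) = σ h⁻¹ (f.1 (g⁻¹ * x))
    rw [← mul_assoc]
    exact f.2 (g⁻¹ * x) h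
  let T : G → (S →ₗ[F] S) := fun g =>
    { toFun := fun f => ⟨fun x => f.1 (g⁻¹ * x), Tmem g f⟩
      map_add' := by intro a b; rfl
      map_smul' := by intro c a; rfl }
  let ρ : Representation F G S :=
    { toFun := T
      map_one' := by
        apply LinearMap.ext; intro f; apply Subtype.ext; funext x
        simp [T]
      map_mul' := by
        intro a b
        apply LinearMap.ext; intro f; apply Subtype.ext; funext x
        simp [T, mul_assoc] }
  -- the nonzero vector
  have f₀mem : (fun x => if hx : x ∈ H then σ (⟨x, hx⟩ : H)⁻¹ w else 0) ∈ S := by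
    intro x h
    by_cases hx : x ∈ H
    · have hxh : x * (h : G) ∈ H := H.mul_mem hx h.2
      have : (⟨x * (h : G), hxh⟩ : H) = ⟨x, hx⟩ * h := rfl
      simp only [hx, hxh, dif_pos, this, mul_inv_rev, map_mul]
      rfl
    · have hxh : x * (h : G) ∉ H := by
        intro hc
        exact hx (by simpa using H.mul_mem hc (H.inv_mem h.2))
      simp [hx, hxh]
  refine ⟨S, inferInstance, inferInstance, ρ, ⟨⟨_, f₀mem⟩, ?_⟩, ?_⟩
  · intro hc
    have h1 : (1 : G) ∈ H := H.one_mem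
    have := congrFun (congrArg Subtype.val hc) 1
    simp only [dif_pos h1] at this
    have he : (⟨(1 : G), h1⟩ : H)⁻¹ = 1 := by simp
    rw [he, map_one] at this
    exact hw this
  · intro g hg f hf hfix
    -- get a point where f is nonzero
    have hf1 : f.1 ≠ 0 := fun hc => hf (Subtype.ext hc)
    obtain ⟨x, hx⟩ : ∃ x, f.1 x ≠ 0 := by
      by_contra hc
      push_neg at hc
      exact hf1 (funext hc)
    have hfixfun : ∀ y, f.1 (g⁻¹ * y) = f.1 y := fun y =>
      congrFun (congrArg Subtype.val hfix) y
    have hfixpow : ∀ (j : ℕ) (y : G), f.1 (g⁻¹ ^ j * y) = f.1 y := by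
      intro j
      induction j with
      | zero => intro y; simp
      | succ j ih =>
        intro y
        rw [pow_succ', mul_assoc, hfixfun, ih]
    -- prime order power
    have hn0 : orderOf g ≠ 0 := (orderOf_pos g).ne'
    have hn1 : orderOf g ≠ 1 := by simpa [orderOf_eq_one_iff] using hg
    have hp : (orderOf g).minFac.Prime := Nat.minFac_prime hn1
    set p := (orderOf g).minFac with hpdef
    set h : G := g ^ (orderOf g / p) with hhdef
    have hordh : orderOf h = p := orderOf_pow_orderOf_div hn0 (Nat.minFac_dvd _)
    have hh1 : h ≠ 1 := by
      intro hc
      rw [hc, orderOf_one] at hordh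
      exact hp.one_lt.ne' hordh.symm
    have hfixh : f.1 (h⁻¹ * x) = f.1 x := by
      rw [hhdef, ← inv_pow]
      exact hfixpow _ x
    -- conjugate
    set k : G := x⁻¹ * h⁻¹ * x with hkdef
    have hordk : orderOf k = p := by
      have : k = (MulAut.conj x⁻¹) h⁻¹ := by
        simp [hkdef, MulAut.conj_apply, mul_assoc]
      rw [this, MulEquiv.orderOf_eq, orderOf_inv, hordh]
    have hkH : k ∈ H := hprime k (hordk ▸ hp)
    have hk1 : (⟨k, hkH⟩ : H) ≠ 1 := by
      intro hc
      have : k = 1 := congrArg Subtype.val hc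
      rw [this, orderOf_one] at hordk
      exact hp.one_lt.ne' hordk.symm
    have heq : f.1 (x * (⟨k, hkH⟩ : H)) = σ (⟨k, hkH⟩ : H)⁻¹ (f.1 x) := f.2 x _
    have hxk : x * k = h⁻¹ * x := by
      rw [hkdef]; group
    rw [show ((⟨k, hkH⟩ : H) : G) = k from rfl, hxk, hfixh] at heq
    exact hfreeH (⟨k, hkH⟩ : H)⁻¹ (by simpa using hk1) (f.1 x) hx heq.symm
end

section
/- Let F be a finite field with q elements, q odd, and let α ∈ SL₂(F) with α ≠ ±1. Then: α has two distinct eigenvalues in F if and only if the order of α divides q−1; α has exactly one eigenvalue in F if and only if the order of α divides 2p, where p is the characteristic of F; and α has no eigenvalue in F if and only if the order of α divides q+1. -/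
open Polynomial Matrix

lemma aux_charpoly_fin2 {F : Type*} [Field F] (M : Matrix (Fin 2) (Fin 2) F) :
    M.charpoly = X ^ 2 - C (Matrix.trace M) * X + C M.det := by
  rw [Matrix.charpoly, Matrix.det_fin_two, Matrix.trace_fin_two, Matrix.det_fin_two,
    charmatrix_apply_eq, charmatrix_apply_eq,
    charmatrix_apply_ne _ _ _ (by decide), charmatrix_apply_ne _ _ _ (by decide)]
  simp only [map_add, _root_.map_mul, map_sub]
  ring

lemma aux_unipotent_pow {R : Type*} [Ring R] {M : R} (h : M * M = 0) (k : ℕ) :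
    (1 + M) ^ k = 1 + k • M := by
  induction k with
  | zero => simp
  | succ n ih =>
    rw [pow_succ, ih, add_mul, mul_add, mul_add, one_mul, mul_one, smul_mul_assoc, h,
      smul_zero, add_zero, succ_nsmul, one_mul]
    rw [add_assoc, add_comm M]

lemma aux_quad_dvd {K : Type*} [Field K] {a b : K} (hab : a ≠ b) {g : K[X]}
    (ha : g.IsRoot a) (hb : g.IsRoot b) : (X - C a) * (X - C b) ∣ g :=
  (Polynomial.isCoprime_X_sub_C_of_isUnit_sub (sub_ne_zero.2 hab).isUnit).mul_dvd
    (dvd_iff_isRoot.2 ha) (dvd_iff_isRoot.2 hb)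

lemma aux_quad_eq {K : Type*} [Field K] {P : K[X]} (hm : P.Monic) (hd : P.natDegree = 2)
    {a b : K} (hab : a ≠ b) (ha : P.IsRoot a) (hb : P.IsRoot b) :
    P = (X - C a) * (X - C b) := by
  obtain ⟨c, hc⟩ := aux_quad_dvd hab ha hb
  have hmq : ((X - C a) * (X - C b)).Monic := (monic_X_sub_C a).mul (monic_X_sub_C b)
  have hdq : ((X - C a) * (X - C b)).natDegree = 2 := by
    rw [natDegree_mul (X_sub_C_ne_zero a) (X_sub_C_ne_zero b), natDegree_X_sub_C,
      natDegree_X_sub_C]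
  have hc0 : c ≠ 0 := by rintro rfl; rw [mul_zero] at hc; exact hm.ne_zero hc
  have hcm : c.Monic := by
    have := hm
    rw [hc, Monic, leadingCoeff_mul] at this
    rwa [hmq.leadingCoeff, one_mul] at this
  have : c.natDegree = 0 := by
    have := hd
    rw [hc, natDegree_mul hmq.ne_zero hc0, hdq] at this
    omega
  rw [hc, hcm.natDegree_eq_zero.mp this, mul_one]

lemma aux_quad_coeff {K : Type*} [Field K] (a b : K) :
    ((X - C a) * (X - C b)).coeff 0 = a * b := by
  rw [coeff_zero_eq_eval_zero]
  simp

theorem stmt_16 {F : Type*} [Field F] [Fintype F] [DecidableEq F] {q : ℕ} (hq : q = Fintype.card F)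
    (hodd : Odd q) {p : ℕ} (hp : p = ringChar F)
    (α : Matrix.SpecialLinearGroup (Fin 2) F)
    (hα1 : α ≠ 1) (hαm1 : (α : Matrix (Fin 2) (Fin 2) F) ≠ -1) :
    (((α : Matrix (Fin 2) (Fin 2) F).charpoly.roots.toFinset.card = 2) ↔
        orderOf α ∣ q - 1) ∧
    (((α : Matrix (Fin 2) (Fin 2) F).charpoly.roots.toFinset.card = 1) ↔
        orderOf α ∣ 2 * p) ∧
    (((α : Matrix (Fin 2) (Fin 2) F).charpoly.roots = 0) ↔
        orderOf α ∣ q + 1) := by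
  haveI : CharP F p := hp ▸ ringChar.charP F
  haveI pfact : Fact p.Prime := ⟨CharP.char_is_prime F p⟩
  have pprime : p.Prime := pfact.out
  obtain ⟨n, -, hqpn⟩ := FiniteField.card F p
  rw [← hq] at hqpn
  set A : Matrix (Fin 2) (Fin 2) F := (α : Matrix (Fin 2) (Fin 2) F) with hA
  have hdet : A.det = 1 := α.2
  have hmon : A.charpoly.Monic := A.charpoly_monic
  have hdeg : A.charpoly.natDegree = 2 := by
    rw [A.charpoly_natDegree_eq_dim, Fintype.card_fin]
  have hcp0 : A.charpoly ≠ 0 := hmon.ne_zero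
  have hcoeff0 : A.charpoly.coeff 0 = 1 := by
    rw [aux_charpoly_fin2, hdet]
    simp [coeff_one]
  -- q basic facts
  have hq2 : 2 ≤ q := by rw [hq]; exact Fintype.one_lt_card
  have hq3 : 3 ≤ q := by
    rcases hodd with ⟨k, hk⟩; omega
  have hpq : p ∣ q := hqpn ▸ dvd_pow_self p n.ne_zero
  have hpodd : p ≠ 2 := by
    rintro rfl
    rcases hodd with ⟨k, hk⟩
    omega
  have h2F : (2 : F) ≠ 0 := by
    intro h
    have := (CharP.cast_eq_zero_iff F p 2).mp (by exact_mod_cast h)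
    exact hpodd ((Nat.prime_dvd_prime_iff_eq pprime Nat.prime_two).mp this)
  -- coercion facts
  have coe_pow_eq : ∀ m : ℕ, ((α ^ m : Matrix.SpecialLinearGroup (Fin 2) F) :
      Matrix (Fin 2) (Fin 2) F) = A ^ m := fun m => by
    rw [Matrix.SpecialLinearGroup.coe_pow]
  have order_dvd_of_pow : ∀ m : ℕ, A ^ m = 1 → orderOf α ∣ m := by
    intro m hm
    refine orderOf_dvd_of_pow_eq_one (Subtype.ext ?_)
    rw [coe_pow_eq m] at *
    simpa using hm
  -- order is not 1 or 2
  have hord2 : ¬ orderOf α ∣ 2 := by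
    intro hdvd
    have hα2 : A ^ 2 = 1 := by
      have : α ^ 2 = 1 := orderOf_dvd_iff_pow_eq_one.mp hdvd
      rw [← coe_pow_eq 2, this, Matrix.SpecialLinearGroup.coe_one]
    have hch := A.aeval_self_charpoly
    rw [aux_charpoly_fin2, hdet] at hch
    simp only [map_add, map_sub, _root_.map_mul, map_pow, aeval_X, aeval_C,
      _root_.map_one] at hch
    rw [hα2] at hch
    set t : F := Matrix.trace A with ht
    have htA : t • A = (2 : F) • (1 : Matrix (Fin 2) (Fin 2) F) := by
      have h1 : (algebraMap F (Matrix (Fin 2) (Fin 2) F)) t * A = t • A := by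
        rw [Algebra.algebraMap_eq_smul_one, smul_mul_assoc, one_mul]
      have h2 : (2 : F) • (1 : Matrix (Fin 2) (Fin 2) F) = 1 + 1 := by
        rw [show (2 : F) = 1 + 1 from by norm_num, add_smul, one_smul]
      rw [sub_add_eq_add_sub] at hch
      rw [← h1, h2]
      exact (sub_eq_zero.mp hch).symm
    by_cases ht0 : t = 0
    · rw [ht0, zero_smul] at htA
      have := congr_fun (congr_fun htA 0) 0
      simp [Matrix.smul_apply, Matrix.one_apply_eq] at this
      exact h2F this.symm
    · have hAs : A = (t⁻¹ * 2) • (1 : Matrix (Fin 2) (Fin 2) F) := by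
        have := congr_arg (fun M => t⁻¹ • M) htA
        simpa [smul_smul, inv_mul_cancel₀ ht0] using this
      have hdet' : (t⁻¹ * 2) ^ 2 = 1 := by
        have := hdet
        rw [hAs, Matrix.det_smul, Matrix.det_one, mul_one, Fintype.card_fin] at this
        exact this
      have : (t⁻¹ * 2 - 1) * (t⁻¹ * 2 + 1) = 0 := by ring_nf; linear_combination hdet'
      rcases mul_eq_zero.mp this with h | h
      · have hs : t⁻¹ * 2 = 1 := sub_eq_zero.mp h
        apply hα1
        apply Subtype.ext
        rw [Matrix.SpecialLinearGroup.coe_one, ← hA, hAs, hs, one_smul]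
      · have hs : t⁻¹ * 2 = -1 := eq_neg_of_add_eq_zero_left h
        apply hαm1
        rw [hAs, hs, neg_smul, one_smul]
  -- counting facts
  have hrle : Multiset.card A.charpoly.roots ≤ 2 := le_trans A.charpoly.card_roots' (le_of_eq hdeg)
  have htle : A.charpoly.roots.toFinset.card ≤ Multiset.card A.charpoly.roots :=
    Multiset.toFinset_card_le _
  have hzero_iff : A.charpoly.roots.toFinset.card = 0 ↔ A.charpoly.roots = 0 := by
    rw [Finset.card_eq_zero, Multiset.toFinset_eq_empty]
  -- Forward 1 : two distinct eigenvalues implies order divides q - 1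
  have F1 : A.charpoly.roots.toFinset.card = 2 → orderOf α ∣ q - 1 := by
    intro h2
    obtain ⟨a, b, hab, hset⟩ := Finset.card_eq_two.mp h2
    have ha : A.charpoly.IsRoot a := by
      have : a ∈ A.charpoly.roots.toFinset := by rw [hset]; simp
      rw [Multiset.mem_toFinset, mem_roots hcp0] at this
      exact this
    have hb : A.charpoly.IsRoot b := by
      have : b ∈ A.charpoly.roots.toFinset := by rw [hset]; simp
      rw [Multiset.mem_toFinset, mem_roots hcp0] at this
      exact this
    have heq : A.charpoly = (X - C a) * (X - C b) := aux_quad_eq hmon hdeg hab ha hb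
    have hab1 : a * b = 1 := by rw [← aux_quad_coeff a b, ← heq, hcoeff0]
    have ha0 : a ≠ 0 := left_ne_zero_of_mul_eq_one hab1
    have hb0 : b ≠ 0 := right_ne_zero_of_mul_eq_one hab1
    have hdvd : A.charpoly ∣ (X : F[X]) ^ (q - 1) - 1 := by
      rw [heq]
      refine aux_quad_dvd hab ?_ ?_
      · rw [IsRoot, eval_sub, eval_pow, eval_X, eval_one, hq,
          FiniteField.pow_card_sub_one_eq_one a ha0, sub_self]
      · rw [IsRoot, eval_sub, eval_pow, eval_X, eval_one, hq,
          FiniteField.pow_card_sub_one_eq_one b hb0, sub_self]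
    obtain ⟨g, hg⟩ := hdvd
    have hz : aeval A ((X : F[X]) ^ (q - 1) - 1) = 0 := by
      rw [hg, _root_.map_mul, A.aeval_self_charpoly, zero_mul]
    rw [map_sub, map_pow, aeval_X, _root_.map_one, sub_eq_zero] at hz
    exact order_dvd_of_pow _ hz
  -- Forward 2 : one eigenvalue implies order divides 2p
  have F2 : A.charpoly.roots.toFinset.card = 1 → orderOf α ∣ 2 * p := by
    intro h1
    obtain ⟨l, hset⟩ := Finset.card_eq_one.mp h1
    have hl : A.charpoly.IsRoot l := by
      have : l ∈ A.charpoly.roots.toFinset := by rw [hset]; simp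
      rw [Multiset.mem_toFinset, mem_roots hcp0] at this
      exact this
    obtain ⟨g, hg⟩ := dvd_iff_isRoot.mpr hl
    have hg0 : g ≠ 0 := by rintro rfl; rw [mul_zero] at hg; exact hcp0 hg
    have hgm : g.Monic := by
      have := hmon
      rw [hg, Monic, leadingCoeff_mul, (monic_X_sub_C l).leadingCoeff, one_mul] at this
      exact this
    have hgd : g.natDegree = 1 := by
      have := hdeg
      rw [hg, natDegree_mul (X_sub_C_ne_zero l) hg0, natDegree_X_sub_C] at this
      omega
    have hgeq : g = X - C (-(g.coeff 0)) := by
      rw [map_neg, sub_neg_eq_add]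
      exact hgm.eq_X_add_C hgd
    set m : F := -(g.coeff 0) with hm'
    have hroots : A.charpoly.roots = {l, m} := by
      rw [hg, hgeq, roots_mul (by rw [← hgeq, ← hg]; exact hcp0), roots_X_sub_C, roots_X_sub_C]
      rfl
    have hml : m = l := by
      have : m ∈ A.charpoly.roots.toFinset := by
        rw [Multiset.mem_toFinset, hroots]; simp
      rw [hset, Finset.mem_singleton] at this
      exact this
    have heq : A.charpoly = (X - C l) * (X - C l) := by
      rw [hg, hgeq, hml]
    have hl2 : l * l = 1 := by rw [← aux_quad_coeff l l, ← heq, hcoeff0]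
    -- nilpotent part
    set N : Matrix (Fin 2) (Fin 2) F := A - l • 1 with hN
    have hNsq : N * N = 0 := by
      have hch := A.aeval_self_charpoly
      rw [heq] at hch
      rw [_root_.map_mul, map_sub, aeval_X, aeval_C,
        Algebra.algebraMap_eq_smul_one] at hch
      exact hch
    have hAe : A = l • 1 + N := by rw [hN, add_sub_cancel]
    have hsq : A * A = 1 + (2 * l) • N := by
      rw [hAe, add_mul, mul_add, mul_add, smul_mul_assoc, smul_mul_assoc, one_mul,
        mul_smul_comm, mul_one, hNsq, smul_smul, hl2, one_smul, add_zero,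
        show (2 * l) • N = l • N + l • N from by rw [two_mul, add_smul], add_assoc, one_mul]
    have hMsq : ((2 * l) • N) * ((2 * l) • N) = 0 := by
      rw [smul_mul_assoc, mul_smul_comm, hNsq, smul_zero, smul_zero]
    have hpow : A ^ (2 * p) = 1 := by
      rw [pow_mul, pow_two, hsq, aux_unipotent_pow hMsq]
      rw [← Nat.cast_smul_eq_nsmul F p, CharP.cast_eq_zero F p, zero_smul, add_zero]
    exact order_dvd_of_pow _ hpow
  -- Forward 3 : no eigenvalue implies order divides q + 1
  have F3 : A.charpoly.roots = 0 → orderOf α ∣ q + 1 := by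
    intro h0
    have hirr : Irreducible A.charpoly :=
      (hmon.irreducible_iff_roots_eq_zero_of_degree_le_three (by omega) (by omega)).mpr h0
    haveI := Fact.mk hirr
    set K := AdjoinRoot A.charpoly with hK
    haveI : CharP K p := charP_of_injective_algebraMap (algebraMap F K).injective p
    haveI : ExpChar K p := ExpChar.prime pprime
    set x : K := AdjoinRoot.root A.charpoly with hx'
    have hx : aeval x A.charpoly = 0 := by
      rw [aeval_def]
      exact AdjoinRoot.eval₂_root _
    -- the Frobenius x ↦ x^q as an F-algebra endomorphism of K
    have hcomm : ∀ a : F, iterateFrobenius K p n (algebraMap F K a) = algebraMap F K a := by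
      intro a
      rw [iterateFrobenius_def, ← map_pow, ← hqpn, hq, FiniteField.pow_card]
    let ψ : K →ₐ[F] K := { toRingHom := iterateFrobenius K p (n : ℕ), commutes' := hcomm }
    have hψx : ψ x = x ^ q := by
      show iterateFrobenius K p (n : ℕ) x = x ^ q
      rw [iterateFrobenius_def, ← hqpn]
    have hxq : aeval (x ^ q) A.charpoly = 0 := by
      have h := congrArg ψ hx
      rw [map_zero, ← aeval_algHom_apply, hψx] at h
      exact h
    -- x is not fixed by Frobenius
    have hnotrange : ∀ a : F, algebraMap F K a ≠ x := by
      intro a ha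
      have : aeval (algebraMap F K a) A.charpoly = 0 := by rw [ha]; exact hx
      rw [aeval_algebraMap_apply] at this
      have h0' : aeval a A.charpoly = 0 := by
        have := (map_eq_zero_iff _ (algebraMap F K).injective).mp (by simpa using this)
        simpa using this
      have : a ∈ A.charpoly.roots := by
        rw [mem_roots hcp0]
        simpa [IsRoot] using h0'
      rw [h0] at this
      simp at this
    have hxne : x ^ q ≠ x := by
      intro hfix
      set g : K[X] := X ^ q - X with hg'
      have hgd : g.natDegree = q := by
        rw [hg', hq]
        exact FiniteField.X_pow_card_sub_X_natDegree_eq K (by rw [← hq]; omega)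
      have hg0 : g ≠ 0 := by
        intro h
        rw [h, natDegree_zero] at hgd
        omega
      set s : Finset K := insert x (Finset.univ.image (algebraMap F K)) with hs'
      have hxs : x ∉ Finset.univ.image (algebraMap F K) := by
        intro hmem
        obtain ⟨a, -, ha⟩ := Finset.mem_image.mp hmem
        exact hnotrange a ha
      have hcards : s.card = q + 1 := by
        rw [hs', Finset.card_insert_of_notMem hxs,
          Finset.card_image_of_injective _ (algebraMap F K).injective, Finset.card_univ, hq]
      have hsub : ∀ y ∈ s, y ∈ g.roots := by
        intro y hy
        rw [mem_roots hg0]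
        rcases Finset.mem_insert.mp hy with rfl | hy
        · simp [IsRoot, hg', hfix]
        · obtain ⟨a, -, ha⟩ := Finset.mem_image.mp hy
          subst ha
          simp only [IsRoot, hg', eval_sub, eval_pow, eval_X]
          rw [← map_pow, hq, FiniteField.pow_card, sub_self]
      have hle : s.val ≤ g.roots :=
        (Multiset.le_iff_subset s.nodup).mpr (fun y hy => hsub y hy)
      have := (Multiset.card_le_card hle).trans (g.card_roots'.trans (le_of_eq hgd))
      rw [← Finset.card_def, hcards] at this
      omega
    -- charpoly over K has the two distinct roots x and x^q
    set P : K[X] := A.charpoly.map (algebraMap F K) with hP'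
    have hPm : P.Monic := hmon.map _
    have hPd : P.natDegree = 2 := by rw [hP', natDegree_map, hdeg]
    have hrx : P.IsRoot x := by
      rw [IsRoot, hP', eval_map, ← aeval_def, hx]
    have hrxq : P.IsRoot (x ^ q) := by
      rw [IsRoot, hP', eval_map, ← aeval_def, hxq]
    have hPeq : P = (X - C x) * (X - C (x ^ q)) := aux_quad_eq hPm hPd (Ne.symm hxne) hrx hrxq
    have hP0 : P.coeff 0 = 1 := by
      rw [hP', coeff_map, hcoeff0, _root_.map_one]
    have hxq1 : x ^ (q + 1) = 1 := by
      have : x * x ^ q = 1 := by rw [← aux_quad_coeff x (x ^ q), ← hPeq, hP0]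
      rw [pow_succ']
      exact this
    -- push down to the matrix via the algebra morphism K → M₂(F)
    have hmk : AdjoinRoot.mk A.charpoly ((X : F[X]) ^ (q + 1) - 1) = 0 := by
      rw [map_sub, map_pow, AdjoinRoot.mk_X, _root_.map_one, ← hx', hxq1, sub_self]
    have hdvd := AdjoinRoot.mk_eq_zero.mp hmk
    obtain ⟨g, hg⟩ := hdvd
    have hz : aeval A ((X : F[X]) ^ (q + 1) - 1) = 0 := by
      rw [hg, _root_.map_mul, A.aeval_self_charpoly, zero_mul]
    rw [map_sub, map_pow, aeval_X, _root_.map_one, sub_eq_zero] at hz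
    exact order_dvd_of_pow _ hz
  -- arithmetic exclusions
  have hT1 : ∀ d : ℕ, d ∣ q - 1 → d ∣ 2 * p → d ∣ 2 := by
    intro d h1 h2
    have hnd : ¬ p ∣ d := by
      intro hpd
      have hp1 : p ∣ q - 1 := hpd.trans h1
      have : p ∣ q - (q - 1) := Nat.dvd_sub hpq hp1
      rw [Nat.sub_sub_self (by omega)] at this
      exact pprime.one_lt.ne' (Nat.dvd_one.mp this)
    exact Nat.Coprime.dvd_of_dvd_mul_right
      (((Nat.Prime.coprime_iff_not_dvd pprime).mpr hnd).symm) h2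
  have hT2 : ∀ d : ℕ, d ∣ q + 1 → d ∣ 2 * p → d ∣ 2 := by
    intro d h1 h2
    have hnd : ¬ p ∣ d := by
      intro hpd
      have hp1 : p ∣ q + 1 := hpd.trans h1
      have : p ∣ q + 1 - q := Nat.dvd_sub hp1 hpq
      rw [Nat.add_sub_cancel_left] at this
      exact pprime.one_lt.ne' (Nat.dvd_one.mp this)
    exact Nat.Coprime.dvd_of_dvd_mul_right
      (((Nat.Prime.coprime_iff_not_dvd pprime).mpr hnd).symm) h2
  have hT3 : ∀ d : ℕ, d ∣ q - 1 → d ∣ q + 1 → d ∣ 2 := by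
    intro d h1 h2
    have : d ∣ q + 1 - (q - 1) := Nat.dvd_sub h2 h1
    rwa [show q + 1 - (q - 1) = 2 from by omega] at this
  -- trichotomy
  have tri : A.charpoly.roots = 0 ∨ A.charpoly.roots.toFinset.card = 1 ∨
      A.charpoly.roots.toFinset.card = 2 := by
    have hle := htle.trans hrle
    rcases (show A.charpoly.roots.toFinset.card = 0 ∨ A.charpoly.roots.toFinset.card = 1 ∨
        A.charpoly.roots.toFinset.card = 2 from by omega) with h | h | h
    · exact Or.inl (hzero_iff.mp h)
    · exact Or.inr (Or.inl h)
    · exact Or.inr (Or.inr h)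
  refine ⟨⟨F1, ?_⟩, ⟨F2, ?_⟩, ⟨F3, ?_⟩⟩
  · intro hd
    rcases tri with h | h | h
    · exact absurd (hT3 _ hd (F3 h)) hord2
    · exact absurd (hT1 _ hd (F2 h)) hord2
    · exact h
  · intro hd
    rcases tri with h | h | h
    · exact absurd (hT2 _ (F3 h) hd) hord2
    · exact h
    · exact absurd (hT1 _ (F1 h) hd) hord2
  · intro hd
    rcases tri with h | h | h
    · exact h
    · exact absurd (hT2 _ hd (F2 h)) hord2
    · exact absurd (hT3 _ (F1 h) hd) hord2
end

section
/- For a prime p ≥ 5, the only normal subgroups of SL₂(𝔽_p) are the trivial group, the center {±I}, and SL₂(𝔽_p) itself; consequently PSL₂(𝔽_p) = SL₂(𝔽_p)/{±I} is a simple group. -/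
/-!
PSL₂(F) is simple as soon as |F| ≥ 4 (Iwasawa's criterion), and SL₂(F) is perfect
when 2 and 3 are invertible in F. A normal subgroup N of SL₂ then either maps to the trivial
subgroup of PSL₂, so lies in the centre {±1}, or maps onto it, so that N·Z = SL₂ with Z central.
In the latter case every commutator of SL₂ is a commutator of two elements of N, and perfectness
gives N = SL₂.
-/

open Matrix Matrix.SpecialLinearGroup Subgroup
open scoped MatrixGroups commutatorElement

section Perfect

variable {G : Type*} [Group G]

theorem commutatorElement_mul_mem_center {a b z w : G} (hz : z ∈ center G) (hw : w ∈ center G) :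
    ⁅a * z, b * w⁆ = ⁅a, b⁆ := by
  have hzc : ⁅z, b * w⁆ = 1 :=
    commutatorElement_eq_one_iff_mul_comm.2 (Subgroup.mem_center_iff.1 hz _).symm
  have haw : ⁅a, w⁆ = 1 :=
    commutatorElement_eq_one_iff_mul_comm.2 (Subgroup.mem_center_iff.1 hw _)
  rw [commutatorElement_mul_left_eq_conj_mul, hzc, mul_one, mul_inv_cancel, one_mul,
    commutatorElement_mul_right_eq_mul_conj, haw, mul_one, mul_inv_cancel_right]

theorem Group.IsPerfect.eq_top_of_sup_center_eq_top [Group.IsPerfect G] {N : Subgroup G}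
    (h : N ⊔ center G = ⊤) : N = ⊤ := by
  rw [eq_top_iff, ← Group.IsPerfect.commutator_eq_top, commutator_def, commutator_le]
  intro g hg g' hg'
  rw [← h, mem_sup_of_normal_right] at hg hg'
  obtain ⟨a, ha, z, hz, rfl⟩ := hg
  obtain ⟨b, hb, w, hw, rfl⟩ := hg'
  rw [commutatorElement_mul_mem_center hz hw]
  exact N.commutator_le_self (commutator_mem_commutator ha hb)

theorem Subgroup.Normal.le_center_or_eq_top [Group.IsPerfect G] [IsSimpleGroup (G ⧸ center G)]
    {N : Subgroup G} (hN : N.Normal) : N ≤ center G ∨ N = ⊤ := by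
  let π := QuotientGroup.mk' (center G)
  rcases IsSimpleGroup.eq_bot_or_eq_top_of_normal _ (hN.map π (QuotientGroup.mk'_surjective _))
    with h | h
  · rw [map_eq_bot_iff, QuotientGroup.ker_mk'] at h
    exact Or.inl h
  · refine Or.inr (Group.IsPerfect.eq_top_of_sup_center_eq_top ?_)
    rw [← QuotientGroup.ker_mk' (center G), ← comap_map_eq, h, comap_top]

end Perfect

namespace Matrix.SpecialLinearGroup

variable {R : Type*} [CommRing R] [NoZeroDivisors R]

theorem mem_center_fin_two_iff {g : SL(2, R)} :
    g ∈ center SL(2, R) ↔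
      (g : Matrix (Fin 2) (Fin 2) R) = 1 ∨ (g : Matrix (Fin 2) (Fin 2) R) = -1 := by
  simp only [mem_center_iff, Fintype.card_fin, sq, mul_self_eq_one_iff]
  constructor
  · rintro ⟨r, rfl | rfl, hr⟩
    · exact Or.inl (by rw [← hr, map_one])
    · exact Or.inr (by rw [← hr, map_neg, map_one])
  · rintro (hg | hg)
    · exact ⟨1, Or.inl rfl, by rw [hg, map_one]⟩
    · exact ⟨-1, Or.inr rfl, by rw [hg, map_neg, map_one]⟩

theorem eq_bot_or_eq_center_of_le_center {N : Subgroup SL(2, R)} (hN : N ≤ center SL(2, R)) :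
    N = ⊥ ∨ N = center SL(2, R) := by
  by_cases hneg : ∃ g ∈ N, (g : Matrix (Fin 2) (Fin 2) R) = -1
  · obtain ⟨g, hgN, hg⟩ := hneg
    refine Or.inr (le_antisymm hN fun z hz => ?_)
    rcases mem_center_fin_two_iff.1 hz with hz1 | hz1
    · rw [show z = 1 from Subtype.ext hz1]
      exact N.one_mem
    · rwa [show z = g from Subtype.ext (hz1.trans hg.symm)]
  · refine Or.inl (eq_bot_iff.2 fun z hz => ?_)
    rcases mem_center_fin_two_iff.1 (hN hz) with hz1 | hz1
    · exact mem_bot.2 (Subtype.ext hz1)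
    · exact absurd ⟨z, hz, hz1⟩ hneg

theorem SL2.isPerfect {F : Type*} [Field F] (h2 : (2 : F) ≠ 0) (h3 : (3 : F) ≠ 0) :
    Group.IsPerfect SL(2, F) :=
  ⟨SL2.commutator_eq_top h2 fun h4 => h3 (by linear_combination h4)⟩

end Matrix.SpecialLinearGroup

theorem ZMod.natCast_ne_zero_of_pos_of_lt {p n : ℕ} (hn : 0 < n) (hnp : n < p) :
    (n : ZMod p) ≠ 0 := by
  rw [Ne, ZMod.natCast_eq_zero_iff]
  exact fun h => (Nat.le_of_dvd hn h).not_gt hnp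

theorem stmt_17 {p : ℕ} (hp : p.Prime) (hp5 : 5 ≤ p) :
    ((Subgroup.center (Matrix.SpecialLinearGroup (Fin 2) (ZMod p)) : Set _) =
      {g : Matrix.SpecialLinearGroup (Fin 2) (ZMod p) |
        (g : Matrix (Fin 2) (Fin 2) (ZMod p)) = 1 ∨
        (g : Matrix (Fin 2) (Fin 2) (ZMod p)) = -1}) ∧
    (∀ N : Subgroup (Matrix.SpecialLinearGroup (Fin 2) (ZMod p)), N.Normal →
      N = ⊥ ∨ N = Subgroup.center (Matrix.SpecialLinearGroup (Fin 2) (ZMod p)) ∨ N = ⊤) ∧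
    IsSimpleGroup (Matrix.SpecialLinearGroup (Fin 2) (ZMod p) ⧸
      Subgroup.center (Matrix.SpecialLinearGroup (Fin 2) (ZMod p))) := by
  have : Fact p.Prime := ⟨hp⟩
  have hsimple : IsSimpleGroup PSL(2, ZMod p) :=
    ProjectiveSpecialLinearGroup.rank_two_simple (by rw [Nat.card_zmod]; omega)
  have : Group.IsPerfect SL(2, ZMod p) := SL2.isPerfect
    (by exact_mod_cast ZMod.natCast_ne_zero_of_pos_of_lt (p := p) two_pos (by omega))
    (by exact_mod_cast ZMod.natCast_ne_zero_of_pos_of_lt (p := p) three_pos (by omega))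
  refine ⟨Set.ext fun _ => mem_center_fin_two_iff, fun N hN => ?_, hsimple⟩
  rcases hN.le_center_or_eq_top with hle | htop
  · exact (eq_bot_or_eq_center_of_le_center hle).imp_right Or.inl
  · exact Or.inr (Or.inr htop)
end

section
/- Let D be a division ring of prime characteristic p. Then every finite subgroup of the multiplicative group D^× is cyclic. Consequently, every finite division ring is a field. -/
theorem herstein_aux {D : Type*} [DivisionRing D] {p : ℕ} (hp : p.Prime) [CharP D p]
    (G : Subgroup Dˣ) (hG : Finite G) : IsCyclic G := by
  haveI : Fact p.Prime := ⟨hp⟩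
  letI : Algebra (ZMod p) D := ZMod.algebra _ _
  have hGfin : ((↑) '' (G : Set Dˣ) : Set D).Finite := by
    have : Finite (G : Set Dˣ) := hG
    exact Set.Finite.image _ (Set.toFinite _)
  set s : Set D := (↑) '' (G : Set Dˣ) with hs
  let A := Algebra.adjoin (ZMod p) s
  -- the submonoid closure of s is s itself (plus it contains 1, which is in s)
  have hclos : (Submonoid.closure s : Set D) = s := by
    apply le_antisymm
    · intro x hx
      refine Submonoid.closure_induction (fun y hy => hy) ?_ ?_ hx
      · exact ⟨1, G.one_mem, rfl⟩
      · rintro a b - - ⟨u, hu, rfl⟩ ⟨v, hv, rfl⟩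
        exact ⟨u * v, G.mul_mem hu hv, rfl⟩
    · exact Submonoid.subset_closure
  have hspan : Subalgebra.toSubmodule A = Submodule.span (ZMod p) s := by
    rw [Algebra.adjoin_eq_span, hclos]
  haveI : Module.Finite (ZMod p) (Subalgebra.toSubmodule A) := by
    rw [hspan]
    exact Module.Finite.span_of_finite _ hGfin
  haveI : Module.Finite (ZMod p) A := ‹Module.Finite (ZMod p) (Subalgebra.toSubmodule A)›
  haveI : Finite A := Module.finite_of_finite (ZMod p)
  haveI : IsDomain A := inferInstance
  have hfield : IsField A := Finite.isDomain_to_isField A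
  letI : Field A := hfield.toField
  -- map G into Aˣ
  have hmem : ∀ g : G, ((g : Dˣ) : D) ∈ A :=
    fun g => Algebra.subset_adjoin ⟨g, g.2, rfl⟩
  let f : G →* A :=
    { toFun := fun g => ⟨((g : Dˣ) : D), hmem g⟩
      map_one' := by ext; simp
      map_mul' := fun a b => by ext; simp }
  have hf : Function.Injective f := by
    intro a b hab
    have : ((a : Dˣ) : D) = ((b : Dˣ) : D) := congrArg Subtype.val hab
    exact Subtype.ext (Units.ext this)
  let F := f.toHomUnits
  have hF : Function.Injective F := by
    intro a b hab
    apply hf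
    exact congrArg Units.val hab
  haveI : IsCyclic (F.range) := Subgroup.isCyclic _
  exact isCyclic_of_surjective (MonoidHom.ofInjective hF).symm
    (MonoidHom.ofInjective hF).symm.surjective

theorem stmt_19 {D : Type*} [DivisionRing D] {p : ℕ} (hp : p.Prime) [CharP D p] :
    (∀ G : Subgroup Dˣ, Finite G → IsCyclic G) ∧
    (∀ (E : Type) (_ : DivisionRing E), Finite E → ∀ x y : E, x * y = y * x) := by
  refine ⟨fun G hG => herstein_aux hp G hG, fun E _ hE x y => ?_⟩
  letI := littleWedderburn E
  exact mul_comm x y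
end
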